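/- arXiv:2406.03987 — 4 statements merged into one kernel-verified Lean document; each statement's English description precedes it below -/
import Mathlib

section
/- Riemann–Roch theorem for graphs (Baker–Norine): For every divisor d on a connected weightless loopless multigraph G of genus g with canonical divisor k_G, one has r_G(d) − r_G(k_G − d) = deg(d) − g + 1. -/
open Finset

section Preliminaries

variable {V : Type} [Fintype V] [DecidableEq V]

/-- The degree of a divisor on a graph with vertex set `V`. -/
def degDiv (d : V → ℤ) : ℤ := ∑ v, d v

/-- A divisor is effective if it is nonnegative at every vertex. -/
def Effective (d : V → ℤ) : Prop := ∀ v, 0 ≤ d v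

/-- The principal divisor `t_Z` associated to a subset `Z` of vertices, for the
graph with edge multiplicity function `m`. -/
def tZ (m : V → V → ℕ) (Z : Finset V) : V → ℤ := fun v =>
  if v ∈ Z then -(∑ u ∈ Zᶜ, (m v u : ℤ)) else ∑ u ∈ Z, (m v u : ℤ)

/-- Two divisors are linearly equivalent if their difference lies in the subgroup
generated by the divisors `t_Z`. -/
def LinEquiv (m : V → V → ℕ) (d d' : V → ℤ) : Prop :=
  d - d' ∈ AddSubgroup.closure (Set.range (tZ m))

/-- The simple graph associated to an edge multiplicity function `m`
(an edge between distinct `u`, `v` whenever `m u v > 0`; loops are discarded). -/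
def assocGraph (m : V → V → ℕ) : SimpleGraph V where
  Adj u v := u ≠ v ∧ (0 < m u v ∨ 0 < m v u)
  symm := ⟨fun _ _ h => ⟨h.1.symm, h.2.symm⟩⟩
  loopless := ⟨fun _ h => h.1 rfl⟩

end Preliminaries

section Rank

variable {V : Type} [Fintype V] [DecidableEq V]

/-- The set of integers `k` such that either `k = -1`, or `k ≥ 0` and for every
effective divisor `e` of degree `k`, the divisor `d - e` is linearly equivalent
to an effective divisor. -/
def bnRankSet (m : V → V → ℕ) (d : V → ℤ) : Set ℤ :=
  {k : ℤ | k = -1 ∨ (0 ≤ k ∧ ∀ e : V → ℤ, Effective e → degDiv e = k →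
      ∃ f : V → ℤ, Effective f ∧ LinEquiv m (d - e) f)}

/-- The Baker–Norine rank of a divisor `d` on the weightless loopless multigraph
with edge multiplicity function `m`. -/
noncomputable def bnRank (m : V → V → ℕ) (d : V → ℤ) : ℤ := sSup (bnRankSet m d)

end Rank

section Genus

variable {V : Type} [Fintype V] [DecidableEq V]

/-- The genus of a weightless loopless multigraph: `|E| - |V| + 1` where
`|E| = (1/2) ∑_{u,v} m u v`. -/
def genus (m : V → V → ℕ) : ℤ :=
  (∑ u, ∑ v, (m u v : ℤ)) / 2 - Fintype.card V + 1

/-- The canonical divisor of a weightless loopless multigraph: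
`k_G(v) = val(v) - 2`. -/
def canonical (m : V → V → ℕ) : V → ℤ := fun v => (∑ u, (m v u : ℤ)) - 2

end Genus

/-!
Following Baker–Norine: a numbering `ρ` of the vertices orients every edge towards the later
endpoint, and the divisor `ν_ρ = indeg - 1` of this acyclic orientation has degree `g - 1` and is
not winnable. Reduced divisors and Dhar's burning algorithm show that for every `d`, either `d` or
`ν_ρ - d` is winnable for some `ρ`; hence `r(d) + 1` is the least value of `deg⁺(d' - ν_ρ)` over all
`ρ` and `d' ~ d`. Reversing `ρ` turns `ν_ρ` into `K - ν_ρ`, so `d' ↦ K - d'` matches these values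
for `K - d` with those for `d`, shifted by `deg d - g + 1`.
-/

section Degree

variable {V : Type} [Fintype V]

theorem degDiv_add (a b : V → ℤ) : degDiv (a + b) = degDiv a + degDiv b := by
  simp [degDiv, sum_add_distrib]

theorem degDiv_sub (a b : V → ℤ) : degDiv (a - b) = degDiv a - degDiv b := by
  simp [degDiv, sum_sub_distrib]

theorem degDiv_mono {a b : V → ℤ} (h : a ≤ b) : degDiv a ≤ degDiv b :=
  sum_le_sum fun v _ => h v

theorem degDiv_posPart_sub (a b : V → ℤ) :
    degDiv (a - b)⁺ = degDiv (b - a)⁺ + degDiv (a - b) := by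
  have h := congrArg degDiv (posPart_sub_negPart (a - b))
  rw [degDiv_sub, ← posPart_neg, neg_sub] at h
  linarith

theorem degDiv_posPart_nonneg (a : V → ℤ) : 0 ≤ degDiv a⁺ :=
  sum_nonneg fun v _ => posPart_nonneg a v

end Degree

section Laplacian

variable {V : Type} [Fintype V] (m : V → V → ℕ)

def laplacian : (V → ℤ) →+ (V → ℤ) :=
  AddMonoidHom.mk' (fun x v => ∑ u, (m v u : ℤ) * (x u - x v)) fun x y => by
    funext v
    simp only [Pi.add_apply, ← sum_add_distrib]
    exact sum_congr rfl fun u _ => by ring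

variable {m}

theorem laplacian_apply (x : V → ℤ) (v : V) :
    laplacian m x v = ∑ u, (m v u : ℤ) * (x u - x v) := rfl

theorem laplacian_const (c : ℤ) : laplacian m (fun _ => c) = 0 := by
  funext v
  simp [laplacian_apply]

theorem sum_laplacian_mul_comm (hsymm : ∀ u v, m u v = m v u) (x y : V → ℤ) :
    ∑ v, laplacian m x v * y v = ∑ v, x v * laplacian m y v := by
  simp only [laplacian_apply, sum_mul, mul_sum, mul_sub, sub_mul, sum_sub_distrib]
  congr 1
  · rw [sum_comm]
    exact sum_congr rfl fun v _ => sum_congr rfl fun u _ => by rw [hsymm]; ring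
  · exact sum_congr rfl fun v _ => sum_congr rfl fun u _ => by ring

theorem degDiv_laplacian (hsymm : ∀ u v, m u v = m v u) (x : V → ℤ) :
    degDiv (laplacian m x) = 0 := by
  simpa [degDiv, laplacian_const] using sum_laplacian_mul_comm hsymm x fun _ => 1

end Laplacian

section LinearEquivalence

variable {V : Type} [Fintype V] [DecidableEq V] {m : V → V → ℕ}

variable (m) in
theorem tZ_eq_laplacian (Z : Finset V) :
    tZ m Z = laplacian m (fun v => if v ∈ Z then 1 else 0) := by
  funext v
  by_cases hv : v ∈ Z
  · simp only [tZ, laplacian_apply, if_pos hv, ← sum_neg_distrib]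
    rw [← sum_subset (subset_univ Zᶜ)]
    · refine sum_congr rfl fun u hu => ?_
      simp [(mem_compl.mp hu)]
    · intro u _ hu
      simp [not_not.mp (mem_compl.not.mp hu)]
  · simp only [tZ, laplacian_apply, if_neg hv]
    rw [← sum_subset (subset_univ Z)]
    · exact sum_congr rfl fun u hu => by simp [hu]
    · intro u _ hu
      simp [hu]

variable (m) in
theorem closure_range_tZ :
    AddSubgroup.closure (Set.range (tZ m)) = (laplacian m).range := by
  apply le_antisymm
  · rw [AddSubgroup.closure_le]
    rintro _ ⟨Z, rfl⟩
    exact ⟨_, (tZ_eq_laplacian m Z).symm⟩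
  · rintro _ ⟨x, rfl⟩
    rw [← univ_sum_single x, map_sum]
    refine AddSubgroup.sum_mem _ fun a _ => ?_
    have hsingle :
        Pi.single a (x a) = x a • fun v => if v ∈ ({a} : Finset V) then (1 : ℤ) else 0 := by
      funext v
      by_cases hv : v = a
      · subst hv; simp
      · simp [hv]
    rw [hsingle, map_zsmul, ← tZ_eq_laplacian]
    exact AddSubgroup.zsmul_mem _
      (AddSubgroup.subset_closure (Set.mem_range_self ({a} : Finset V))) _

theorem linEquiv_iff_mem_range {d d' : V → ℤ} :
    LinEquiv m d d' ↔ d - d' ∈ (laplacian m).range := by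
  rw [LinEquiv, closure_range_tZ]

theorem LinEquiv.refl (d : V → ℤ) : LinEquiv m d d := by
  rw [LinEquiv, sub_self]
  exact zero_mem _

theorem LinEquiv.trans {a b c : V → ℤ} (hab : LinEquiv m a b) (hbc : LinEquiv m b c) :
    LinEquiv m a c := by
  rw [LinEquiv, ← sub_add_sub_cancel a b c]
  exact add_mem hab hbc

theorem LinEquiv.add {a a' b b' : V → ℤ} (ha : LinEquiv m a a') (hb : LinEquiv m b b') :
    LinEquiv m (a + b) (a' + b') := by
  rw [LinEquiv, add_sub_add_comm]
  exact add_mem ha hb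

theorem LinEquiv.sub {a a' b b' : V → ℤ} (ha : LinEquiv m a a') (hb : LinEquiv m b b') :
    LinEquiv m (a - b) (a' - b') := by
  rw [LinEquiv, sub_sub_sub_comm]
  exact sub_mem ha hb

theorem LinEquiv.degDiv_eq (hsymm : ∀ u v, m u v = m v u) {d d' : V → ℤ}
    (h : LinEquiv m d d') : degDiv d = degDiv d' := by
  obtain ⟨x, hx⟩ := linEquiv_iff_mem_range.mp h
  rw [← sub_eq_zero, ← degDiv_sub, ← hx, degDiv_laplacian hsymm]

end LinearEquivalence

section Orientation

variable {V : Type} [Fintype V] {m : V → V → ℕ}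

variable (m) in
/-- The divisor `ν(v) = indeg(v) - 1` of the acyclic orientation of `G` in which every edge points
from the endpoint with the smaller `ρ`-value to the one with the larger. -/
def orientationDivisor (ρ : V → ℤ) : V → ℤ := fun v => (∑ u with ρ u < ρ v, (m v u : ℤ)) - 1

/-- Witness: the `ρ`-first vertex among the maximizers of `y`. -/
theorem exists_orientationDivisor_add_laplacian_neg [Nonempty V] (ρ y : V → ℤ) :
    ∃ v, orientationDivisor m ρ v + laplacian m y v < 0 := by
  obtain ⟨w, -, hw⟩ := exists_max_image univ y univ_nonempty
  obtain ⟨v, hv, hvmin⟩ := exists_min_image {u | y u = y w} ρ ⟨w, by simp⟩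
  replace hv : y v = y w := by simpa using hv
  refine ⟨v, ?_⟩
  have hle : laplacian m y v ≤ ∑ u, if ρ u < ρ v then -(m v u : ℤ) else 0 := by
    refine sum_le_sum fun u _ => ?_
    split_ifs with hu
    · have : y u ≠ y w := fun h => (hvmin u (by simpa using h)).not_gt hu
      have : y u < y v := lt_of_le_of_ne (hv ▸ hw u (mem_univ u)) (hv ▸ this)
      nlinarith [(m v u).cast_nonneg (α := ℤ)]
    · exact mul_nonpos_of_nonneg_of_nonpos (by positivity) (by linarith [hw u (mem_univ u)])
  rw [← sum_filter, sum_neg_distrib] at hle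
  rw [orientationDivisor]
  linarith

theorem orientationDivisor_add_orientationDivisor_neg (hloop : ∀ v, m v v = 0) {ρ : V → ℤ}
    (hρ : Function.Injective ρ) :
    orientationDivisor m ρ + orientationDivisor m (-ρ) = canonical m := by
  funext v
  simp only [Pi.add_apply, orientationDivisor, canonical, Pi.neg_apply, neg_lt_neg_iff]
  rw [sum_filter, sum_filter, sub_add_sub_comm, ← sum_add_distrib]
  have hsplit : ∀ u, (if ρ u < ρ v then (m v u : ℤ) else 0) + (if ρ v < ρ u then (m v u : ℤ) else 0)
      = m v u := fun u => by
    rcases lt_trichotomy (ρ u) (ρ v) with h | h | h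
    · simp [h, h.not_gt]
    · simp [hρ h, hloop]
    · simp [h, h.not_gt]
  rw [sum_congr rfl fun u _ => hsplit u]
  ring

theorem degDiv_orientationDivisor_neg (hsymm : ∀ u v, m u v = m v u) (ρ : V → ℤ) :
    degDiv (orientationDivisor m (-ρ)) = degDiv (orientationDivisor m ρ) := by
  simp only [degDiv, orientationDivisor, Pi.neg_apply, neg_lt_neg_iff, sum_sub_distrib, sum_filter]
  rw [sum_comm]
  simp only [hsymm]

theorem degDiv_canonical (hsymm : ∀ u v, m u v = m v u) (hloop : ∀ v, m v v = 0) :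
    degDiv (canonical m) = 2 * genus m - 2 := by
  obtain ⟨ρ, hρ⟩ := Countable.exists_injective_nat V
  have hK := congrArg degDiv (orientationDivisor_add_orientationDivisor_neg hloop
    (Nat.cast_injective.comp hρ : Function.Injective fun v => (ρ v : ℤ)))
  rw [degDiv_add, degDiv_orientationDivisor_neg hsymm] at hK
  have hsum : ∑ u, ∑ v, (m u v : ℤ) = degDiv (canonical m) + 2 * Fintype.card V := by
    simp [degDiv, canonical, sum_sub_distrib, mul_comm]
  rw [genus, hsum, ← hK]
  omega

theorem degDiv_orientationDivisor (hsymm : ∀ u v, m u v = m v u) (hloop : ∀ v, m v v = 0)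
    {ρ : V → ℤ} (hρ : Function.Injective ρ) : degDiv (orientationDivisor m ρ) = genus m - 1 := by
  have hK := congrArg degDiv (orientationDivisor_add_orientationDivisor_neg hloop hρ)
  rw [degDiv_add, degDiv_orientationDivisor_neg hsymm, degDiv_canonical hsymm hloop] at hK
  linarith

end Orientation

section Winnability

variable {V : Type} [Fintype V] [DecidableEq V] {m : V → V → ℕ}

variable (m) in
def Winnable (d : V → ℤ) : Prop := ∃ f, Effective f ∧ LinEquiv m d f

theorem Effective.winnable {d : V → ℤ} (h : Effective d) : Winnable m d := ⟨d, h, .refl d⟩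

theorem Winnable.of_linEquiv {d d' : V → ℤ} (h : LinEquiv m d d') (hw : Winnable m d') :
    Winnable m d :=
  let ⟨f, hf, hd'f⟩ := hw
  ⟨f, hf, h.trans hd'f⟩

theorem Winnable.add {a b : V → ℤ} (ha : Winnable m a) (hb : Winnable m b) :
    Winnable m (a + b) :=
  let ⟨f, hf, haf⟩ := ha
  let ⟨g, hg, hbg⟩ := hb
  ⟨f + g, fun v => add_nonneg (hf v) (hg v), haf.add hbg⟩

theorem not_winnable_orientationDivisor [Nonempty V] (ρ : V → ℤ) :
    ¬ Winnable m (orientationDivisor m ρ) := by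
  rintro ⟨f, hf, hνf⟩
  obtain ⟨x, hx⟩ := linEquiv_iff_mem_range.mp hνf
  obtain ⟨v, hv⟩ := exists_orientationDivisor_add_laplacian_neg (m := m) ρ (-x)
  have hfv := congrFun hx v
  simp only [map_neg, Pi.neg_apply, Pi.sub_apply] at hv hfv
  linarith [hf v]

theorem Winnable.not_winnable_orientationDivisor_sub [Nonempty V] {d : V → ℤ}
    (hd : Winnable m d) (ρ : V → ℤ) : ¬ Winnable m (orientationDivisor m ρ - d) := fun h =>
  not_winnable_orientationDivisor ρ (by simpa using hd.add h)

end Winnability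

theorem SimpleGraph.Connected.exists_adj_dist_add_one {W : Type} {G : SimpleGraph W}
    (hG : G.Connected) {q v : W} (hv : v ≠ q) : ∃ u, G.Adj v u ∧ G.dist q u + 1 = G.dist q v := by
  obtain ⟨p, hp⟩ := (hG v q).exists_walk_length_eq_dist
  cases p with
  | nil => exact absurd rfl hv
  | @cons _ u _ hadj p =>
    refine ⟨u, hadj, ?_⟩
    have hu : G.dist q u ≤ p.length := G.dist_comm ▸ G.dist_le p
    rw [SimpleGraph.Walk.length_cons, G.dist_comm] at hp
    have := hadj.diff_dist_adj (u := q)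
    omega

theorem pos_of_adj_assocGraph {V : Type} {m : V → V → ℕ} (hsymm : ∀ u v, m u v = m v u) {u v : V}
    (h : (assocGraph m).Adj u v) : 0 < m u v :=
  h.2.elim id fun h => hsymm u v ▸ h

section Potential

variable {V : Type} [Fintype V] {m : V → V → ℕ}

/-- Along a shortest path the potential `c ^ D - c ^ (D - δ)` drops by a factor `c` per step,
which outweighs all other edges at `v` once `c` exceeds the valence of `v`. -/
theorem laplacian_pow_sub_pow_le {c D : ℕ} {δ : V → ℕ} {v u₀ : V} (hD : ∀ w, δ w ≤ D)
    (hc : ∑ u, m v u + 2 ≤ c) (hu₀ : 0 < m v u₀) (hδ : δ u₀ + 1 = δ v) :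
    laplacian m (fun w => (c : ℤ) ^ D - (c : ℤ) ^ (D - δ w)) v ≤ -1 := by
  have hc' : (∑ u, (m v u : ℤ)) + 2 ≤ c := by exact_mod_cast hc
  have hX : 1 ≤ (c : ℤ) ^ (D - δ v) := one_le_pow₀ (by omega)
  have hlap : laplacian m (fun w => (c : ℤ) ^ D - (c : ℤ) ^ (D - δ w)) v
      = (∑ u, (m v u : ℤ)) * c ^ (D - δ v) - ∑ u, (m v u : ℤ) * c ^ (D - δ u) := by
    simp only [laplacian_apply, sum_mul, ← sum_sub_distrib]
    exact sum_congr rfl fun u _ => by ring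
  have hu₀' : (c : ℤ) * c ^ (D - δ v) ≤ m v u₀ * c ^ (D - δ u₀) := by
    rw [show D - δ u₀ = D - δ v + 1 by have := hD v; omega, pow_succ]
    have : (1 : ℤ) ≤ m v u₀ := by exact_mod_cast hu₀
    nlinarith [mul_le_mul_of_nonneg_right this (by positivity : (0 : ℤ) ≤ c ^ (D - δ v) * c)]
  have hsum : (m v u₀ : ℤ) * c ^ (D - δ u₀) ≤ ∑ u, (m v u : ℤ) * c ^ (D - δ u) :=
    single_le_sum (f := fun u => (m v u : ℤ) * c ^ (D - δ u)) (fun u _ => by positivity)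
      (mem_univ u₀)
  nlinarith

theorem exists_potential (hsymm : ∀ u v, m u v = m v u) (hconn : (assocGraph m).Connected)
    (q : V) : ∃ Y : V → ℤ, 0 ≤ Y ∧ Y q = 0 ∧ ∀ v ≠ q, laplacian m Y v ≤ -1 := by
  set G := assocGraph m
  set c := univ.sup (fun w => ∑ u, m w u) + 2
  set D := univ.sup (G.dist q)
  refine ⟨fun w => (c : ℤ) ^ D - (c : ℤ) ^ (D - G.dist q w), fun w => ?_, by simp, fun v hv => ?_⟩
  · have : (c : ℤ) ^ (D - G.dist q w) ≤ c ^ D := pow_le_pow_right₀ (by omega) (Nat.sub_le _ _)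
    simpa using this
  · obtain ⟨u, hadj, hu⟩ := hconn.exists_adj_dist_add_one hv
    have hval : ∑ u, m v u ≤ univ.sup (fun w => ∑ u, m w u) :=
      le_sup (f := fun w => ∑ u, m w u) (mem_univ v)
    exact laplacian_pow_sub_pow_le (fun w => le_sup (mem_univ w)) (by omega)
      (pos_of_adj_assocGraph hsymm hadj) hu

theorem exists_add_laplacian_nonneg {Y : V → ℤ} {q : V} (hY : ∀ v ≠ q, laplacian m Y v ≤ -1)
    (d : V → ℤ) : ∃ x, ∀ v ≠ q, 0 ≤ (d + laplacian m x) v := by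
  refine ⟨(-∑ v, |d v|) • Y, fun v hv => ?_⟩
  have hd : -d v ≤ ∑ v, |d v| :=
    (neg_le_abs _).trans
      (single_le_sum (f := fun v => |d v|) (fun _ _ => abs_nonneg _) (mem_univ v))
  have ht : 0 ≤ ∑ v, |d v| := sum_nonneg fun _ _ => abs_nonneg _
  simp only [Pi.add_apply, map_zsmul, Pi.smul_apply, smul_eq_mul]
  nlinarith [mul_le_mul_of_nonneg_left (hY v hv) ht]

end Potential

section Reduced

variable {V : Type} [Fintype V] [DecidableEq V] {m : V → V → ℕ}

variable (m) in
/-- `d` is `q`-reduced; `d + tZ m A` is `d` after every vertex of `A` has fired. -/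
def IsReducedAt (q : V) (d : V → ℤ) : Prop :=
  (∀ v ≠ q, 0 ≤ d v) ∧ ∀ A : Finset V, A.Nonempty → q ∉ A → ∃ v ∈ A, d v + tZ m A v < 0

theorem tZ_nonneg_of_notMem {A : Finset V} {v : V} (hv : v ∉ A) : 0 ≤ tZ m A v := by
  rw [tZ, if_neg hv]
  positivity

theorem sum_tZ_mul_neg (hsymm : ∀ u v, m u v = m v u) {Y : V → ℤ} {q : V}
    (hY : ∀ v ≠ q, laplacian m Y v ≤ -1) {A : Finset V} (hA : A.Nonempty) (hqA : q ∉ A) :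
    ∑ v, tZ m A v * Y v < 0 := by
  rw [tZ_eq_laplacian, sum_laplacian_mul_comm hsymm]
  simp only [ite_mul, one_mul, zero_mul]
  rw [sum_ite_mem, univ_inter]
  calc ∑ v ∈ A, laplacian m Y v ≤ ∑ _v ∈ A, (-1 : ℤ) :=
        sum_le_sum fun v hv => hY v (ne_of_mem_of_not_mem hv hqA)
    _ < 0 := by simp [hA.card_pos]

/-- Among the `q`-effective divisors equivalent to `d`, one minimizing the energy `∑ e v * Y v`
is reduced, since firing a set avoiding `q` lowers the energy. -/
theorem exists_linEquiv_isReducedAt (hsymm : ∀ u v, m u v = m v u)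
    (hconn : (assocGraph m).Connected) (q : V) (d : V → ℤ) :
    ∃ d', LinEquiv m d d' ∧ IsReducedAt m q d' := by
  obtain ⟨Y, hY0, hYq, hYlap⟩ := exists_potential hsymm hconn q
  let energy (e : V → ℤ) : ℤ := ∑ v, e v * Y v
  have henergy_nonneg (e : V → ℤ) (he : ∀ v ≠ q, 0 ≤ e v) : 0 ≤ energy e :=
    sum_nonneg fun v _ => by
      by_cases hv : v = q
      · simp [hv, hYq]
      · exact mul_nonneg (he v hv) (hY0 v)
  obtain ⟨_, ⟨x, hx, rfl⟩, hmin⟩ := Int.exists_least_of_bdd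
    (P := fun t => ∃ x, (∀ v ≠ q, 0 ≤ (d + laplacian m x) v) ∧ energy (d + laplacian m x) = t)
    ⟨0, fun _ ⟨x, hx, ht⟩ => ht ▸ henergy_nonneg _ hx⟩
    (let ⟨x, hx⟩ := exists_add_laplacian_nonneg hYlap d; ⟨_, x, hx, rfl⟩)
  refine ⟨d + laplacian m x, linEquiv_iff_mem_range.mpr ⟨-x, by simp⟩, hx, fun A hA hqA => ?_⟩
  by_contra! hfire
  have hfired : d + laplacian m (x + fun v => if v ∈ A then 1 else 0)
      = d + laplacian m x + tZ m A := by
    rw [map_add, tZ_eq_laplacian, add_assoc]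
  have hfired_eff : ∀ v ≠ q, 0 ≤ (d + laplacian m x + tZ m A) v := fun v hv => by
    by_cases hvA : v ∈ A
    · exact hfire v hvA
    · exact add_nonneg (hx v hv) (tZ_nonneg_of_notMem hvA)
  have hle := hmin _ ⟨_, hfired ▸ hfired_eff, rfl⟩
  rw [hfired] at hle
  simp only [energy, Pi.add_apply, add_mul, sum_add_distrib] at hle
  linarith [sum_tZ_mul_neg hsymm hYlap hA hqA]

end Reduced

section Burning

variable {V : Type} [DecidableEq V] {m : V → V → ℕ} {q : V} {d : V → ℤ}

variable (m q d) in
/-- `ρ` orders `B` as Dhar's burning algorithm started at `q` burns it. -/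
def IsBurnOrder (B : Finset V) (ρ : V → ℤ) : Prop :=
  Set.InjOn ρ B ∧ ∀ v ∈ B, v ≠ q → d v < ∑ u ∈ B with ρ u < ρ v, (m v u : ℤ)

theorem IsBurnOrder.insert {B : Finset V} {ρ : V → ℤ} (h : IsBurnOrder m q d B ρ) {v : V}
    (hv : v ∉ B) {N : ℤ} (hN : ∀ u ∈ B, ρ u < N) (hdv : d v < ∑ u ∈ B, (m v u : ℤ)) :
    IsBurnOrder m q d (insert v B) (Function.update ρ v N) := by
  have hupd : ∀ u ∈ B, Function.update ρ v N u = ρ u := fun u hu =>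
    Function.update_of_ne (ne_of_mem_of_not_mem hu hv) _ _
  refine ⟨?_, fun w hw hwq => ?_⟩
  · rw [coe_insert, Set.injOn_insert (by simpa using hv), Function.update_self]
    refine ⟨h.1.congr fun u hu => (hupd u hu).symm, ?_⟩
    rintro ⟨u, hu, hNu⟩
    rw [hupd u hu] at hNu
    exact (hN u hu).ne hNu
  rcases mem_insert.mp hw with rfl | hwB
  · rwa [filter_insert, if_neg (by simp), Function.update_self,
      filter_true_of_mem fun u hu => (hupd u hu).symm ▸ hN u hu]
  · rw [filter_insert, if_neg (by simpa [hupd w hwB] using (hN w hwB).le.not_gt),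
      filter_congr fun u hu => by rw [hupd u hu, hupd w hwB]]
    exact h.2 w hwB hwq

theorem IsReducedAt.exists_isBurnOrder_univ [Fintype V] (hd : IsReducedAt m q d) {B : Finset V}
    (hqB : q ∈ B) {ρ : V → ℤ} (h : IsBurnOrder m q d B ρ) : ∃ ρ', IsBurnOrder m q d univ ρ' := by
  by_cases hB : Bᶜ.Nonempty
  · obtain ⟨v, hvB, hv⟩ := hd.2 Bᶜ hB (by simpa using hqB)
    rw [tZ, if_pos hvB, compl_compl] at hv
    obtain ⟨M, hM⟩ := (B.image ρ).exists_le
    exact hd.exists_isBurnOrder_univ (mem_insert_of_mem hqB)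
      (h.insert (mem_compl.mp hvB) (N := M + 1)
        (fun u hu => by linarith [hM _ (mem_image_of_mem ρ hu)]) (by linarith))
  · rw [not_nonempty_iff_eq_empty, compl_eq_empty_iff] at hB
    exact ⟨ρ, hB ▸ h⟩
termination_by Bᶜ.card
decreasing_by
  rw [compl_insert]
  exact card_erase_lt_of_mem hvB

end Burning

section Dichotomy

variable {V : Type} [Fintype V] [DecidableEq V] {m : V → V → ℕ}

/-- Either `d` is winnable, or a `q`-reduced representative `d'` has a debt at `q`; then burning
from `q` orders the vertices so that `d' ≤ ν_ρ`. -/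
theorem winnable_or_winnable_orientationDivisor_sub (hsymm : ∀ u v, m u v = m v u)
    (hconn : (assocGraph m).Connected) (d : V → ℤ) :
    Winnable m d ∨ ∃ ρ, Function.Injective ρ ∧ Winnable m (orientationDivisor m ρ - d) := by
  obtain ⟨q⟩ := hconn.nonempty
  obtain ⟨d', hdd', hred⟩ := exists_linEquiv_isReducedAt hsymm hconn q d
  by_cases hq : 0 ≤ d' q
  · refine .inl (Winnable.of_linEquiv hdd' (Effective.winnable fun v => ?_))
    by_cases hv : v = q
    · exact hv ▸ hq
    · exact hred.1 v hv
  have hstart : IsBurnOrder m q d' {q} 0 :=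
    ⟨by simp, fun v hv hvq => absurd (mem_singleton.mp hv) hvq⟩
  obtain ⟨ρ, hρinj, hρ⟩ := hred.exists_isBurnOrder_univ (mem_singleton_self q) hstart
  refine .inr ⟨ρ, by simpa [Set.injOn_univ] using hρinj,
    Winnable.of_linEquiv ((LinEquiv.refl _).sub hdd') (Effective.winnable fun v => ?_)⟩
  rw [Pi.sub_apply, sub_nonneg, orientationDivisor]
  by_cases hv : v = q
  · subst hv
    have : (0 : ℤ) ≤ ∑ u with ρ u < ρ v, (m v u : ℤ) := by positivity
    linarith
  · linarith [hρ v (mem_univ v) hv]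

end Dichotomy

section Rank

variable {V : Type} [Fintype V] [DecidableEq V] {m : V → V → ℕ}

variable (m) in
def defectSet (d : V → ℤ) : Set ℤ :=
  {t | ∃ ρ : V → ℤ, Function.Injective ρ ∧
    ∃ d', LinEquiv m d d' ∧ degDiv (d' - orientationDivisor m ρ)⁺ = t}

theorem winnable_sub_of_forall_lt_defectSet (hsymm : ∀ u v, m u v = m v u)
    (hconn : (assocGraph m).Connected) {d e : V → ℤ} (he : Effective e)
    (h : ∀ t ∈ defectSet m d, degDiv e < t) : Winnable m (d - e) := by
  refine (winnable_or_winnable_orientationDivisor_sub hsymm hconn (d - e)).resolve_right ?_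
  rintro ⟨ρ, hρ, f, hf, hνf⟩
  set ν := orientationDivisor m ρ
  have hequiv : LinEquiv m d (ν - f + e) := by
    rw [LinEquiv, show d - (ν - f + e) = -(ν - (d - e) - f) by abel]
    exact neg_mem hνf
  refine (h _ ⟨ρ, hρ, _, hequiv, rfl⟩).not_ge (degDiv_mono ?_)
  rw [show ν - f + e - ν = e - f by abel, posPart_def]
  exact sup_le (sub_le_self _ fun v => hf v) fun v => he v

theorem exists_effective_not_winnable_sub [Nonempty V] {d : V → ℤ} {t k : ℤ}
    (ht : t ∈ defectSet m d) (htk : t ≤ k) :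
    ∃ e, Effective e ∧ degDiv e = k ∧ ¬ Winnable m (d - e) := by
  obtain ⟨ρ, -, d', hdd', rfl⟩ := ht
  obtain ⟨v₀⟩ := ‹Nonempty V›
  set ν := orientationDivisor m ρ
  have hs : (0 : V → ℤ) ≤ Pi.single v₀ (k - degDiv (d' - ν)⁺) := by
    simpa using htk
  set e := (d' - ν)⁺ + Pi.single v₀ (k - degDiv (d' - ν)⁺)
  have hdeg : degDiv e = k := by
    rw [degDiv_add]
    simp [degDiv]
  refine ⟨e, fun v => add_nonneg (posPart_nonneg _) hs v, hdeg, fun hw =>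
    hw.not_winnable_orientationDivisor_sub ρ ?_⟩
  refine Winnable.of_linEquiv ((LinEquiv.refl ν).sub (hdd'.sub (.refl e)))
    (Effective.winnable fun v => ?_)
  have : (d' - ν) v ≤ e v := ((le_posPart _).trans (le_add_of_nonneg_right hs)) v
  simp only [Pi.sub_apply] at this ⊢
  linarith

theorem isLeast_defectSet (hsymm : ∀ u v, m u v = m v u) (hconn : (assocGraph m).Connected)
    (d : V → ℤ) : IsLeast (defectSet m d) (bnRank m d + 1) := by
  have : Nonempty V := hconn.nonempty
  obtain ⟨ρ₀, hρ₀⟩ := Countable.exists_injective_nat V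
  obtain ⟨μ, hμ, hμmin⟩ := Int.exists_least_of_bdd (P := (· ∈ defectSet m d))
    ⟨0, by rintro _ ⟨_, _, d', _, rfl⟩; exact degDiv_posPart_nonneg _⟩
    ⟨_, fun v => (ρ₀ v : ℤ), Nat.cast_injective.comp hρ₀, d, .refl d, rfl⟩
  have hμ0 : 0 ≤ μ := by
    obtain ⟨_, _, d', _, rfl⟩ := hμ
    exact degDiv_posPart_nonneg _
  suffices bnRank m d = μ - 1 by rw [this, sub_add_cancel]; exact ⟨hμ, hμmin⟩
  refine IsGreatest.csSup_eq ⟨?_, ?_⟩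
  · rcases hμ0.eq_or_lt with hzero | hpos
    · exact .inl (by omega)
    · refine .inr ⟨by omega, fun e he hdeg => winnable_sub_of_forall_lt_defectSet hsymm hconn he
        fun t ht => by linarith [hμmin t ht]⟩
  · rintro k (rfl | ⟨-, hk⟩)
    · omega
    · by_contra! hμk
      obtain ⟨e, he, hdeg, hnw⟩ := exists_effective_not_winnable_sub hμ (by omega : μ ≤ k)
      exact hnw (hk e he hdeg)

theorem add_mem_defectSet_of_mem_defectSet_canonical_sub (hsymm : ∀ u v, m u v = m v u)
    (hloop : ∀ v, m v v = 0) {d : V → ℤ} {t : ℤ} (ht : t ∈ defectSet m (canonical m - d)) :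
    t + (degDiv d - genus m + 1) ∈ defectSet m d := by
  obtain ⟨ρ, hρ, d', hd', rfl⟩ := ht
  refine ⟨-ρ, neg_injective.comp hρ, canonical m - d',
    by simpa using (LinEquiv.refl (canonical m)).sub hd', ?_⟩
  have hν : canonical m - d' - orientationDivisor m (-ρ) = orientationDivisor m ρ - d' := by
    rw [← orientationDivisor_add_orientationDivisor_neg hloop hρ]
    abel
  have hdeg := hd'.degDiv_eq hsymm
  rw [hν, degDiv_posPart_sub, degDiv_sub, degDiv_orientationDivisor hsymm hloop hρ]
  rw [degDiv_sub, degDiv_canonical hsymm hloop] at hdeg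
  linarith

end Rank

/-- **Riemann–Roch theorem for graphs (Baker–Norine).** -/
theorem riemannRoch_graphs {V : Type} [Fintype V] [DecidableEq V]
    (m : V → V → ℕ) (hsymm : ∀ u v, m u v = m v u) (hloop : ∀ v, m v v = 0)
    (hconn : (assocGraph m).Connected)
    (d : V → ℤ) :
    bnRank m d - bnRank m (canonical m - d) = degDiv d - genus m + 1 := by
  have hd := isLeast_defectSet hsymm hconn d
  have hKd := isLeast_defectSet hsymm hconn (canonical m - d)
  have h₁ := hd.2 (add_mem_defectSet_of_mem_defectSet_canonical_sub hsymm hloop hKd.1)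
  have h₂ := hKd.2 (add_mem_defectSet_of_mem_defectSet_canonical_sub hsymm hloop
    (d := canonical m - d) (t := bnRank m d + 1) (by rw [sub_sub_cancel]; exact hd.1))
  rw [degDiv_sub, degDiv_canonical hsymm hloop] at h₂
  linarith
end

section
/- Clifford inequality for weighted graphs with loops: If d is a divisor on a connected weighted graph G (possibly with loops) of genus g with 0 ≤ deg(d) ≤ 2g − 2, then 2·r_G(d) ≤ deg(d), where r_G is the rank defined via the associated weightless loopless graph G^•. -/
open Finset

section Weighted

variable {V : Type} [Fintype V] [DecidableEq V]

/-- The valence of a vertex of a weighted graph with loops: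
`val(v) = ∑_{u ≠ v} m v u + 2 * m v v`. -/
def valence (m : V → V → ℕ) (v : V) : ℤ := (∑ u, (m v u : ℤ)) + m v v

/-- The genus of a weighted graph with loops:
`g = |E| - |V| + 1 + ∑_v ω v` where `|E| = ∑_v m v v + (1/2) ∑_{u ≠ v} m u v`. -/
def genusW (m : V → V → ℕ) (ω : V → ℕ) : ℤ :=
  ((∑ u, ∑ v, (m u v : ℤ)) + ∑ v, (m v v : ℤ)) / 2 - Fintype.card V + 1
    + ∑ v, (ω v : ℤ)

/-- The canonical divisor of a weighted graph with loops:
`k_G(v) = 2 ω(v) - 2 + val(v)`. -/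
def canonicalW (m : V → V → ℕ) (ω : V → ℕ) : V → ℤ :=
  fun v => 2 * (ω v : ℤ) - 2 + valence m v

end Weighted

section Bullet

variable {V : Type} [Fintype V] [DecidableEq V]

/-- The vertex set of the associated weightless loopless graph `G^•`:
the original vertices together with `ω v + m v v` new vertices for each `v`. -/
abbrev BV (ω : V → ℕ) (m : V → V → ℕ) : Type := V ⊕ (Σ v : V, Fin (ω v + m v v))

/-- The edge multiplicity function of the associated weightless loopless graph `G^•`. -/
def bulletM (ω : V → ℕ) (m : V → V → ℕ) : BV ω m → BV ω m → ℕ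
  | Sum.inl u, Sum.inl v => if u = v then 0 else m u v
  | Sum.inl u, Sum.inr ⟨v, _⟩ => if u = v then 2 else 0
  | Sum.inr ⟨u, _⟩, Sum.inl v => if u = v then 2 else 0
  | Sum.inr _, Sum.inr _ => 0

/-- The extension-by-zero of a divisor on `G` to a divisor on `G^•`. -/
def iota (ω : V → ℕ) (m : V → V → ℕ) (d : V → ℤ) : BV ω m → ℤ
  | Sum.inl v => d v
  | Sum.inr _ => 0

/-- The rank of a divisor on a weighted graph with loops, defined as the
Baker–Norine rank of its extension by zero to `G^•`. -/
noncomputable def wRank (ω : V → ℕ) (m : V → V → ℕ) (d : V → ℤ) : ℤ :=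
  bnRank (bulletM ω m) (iota ω m d)

end Bullet

/-!
Everything happens on the loopless multigraph `G^•`. For an injective `p : V → ℕ` (a total order
of the vertices) let `ν_p(v)` be the number of edges from `v` to `p`-smaller vertices, minus one.
No `ν_p` is equivalent to an effective divisor (look at a `p`-first maximum of a firing script),
and conversely a divisor `D` with `|D| = ∅` satisfies `D ≤ ν_p` up to equivalence for some `p`:
move `D` to a divisor effective off a vertex `q` that minimises a strictly superharmonic potential;
then no set avoiding `q` can fire, and burning from `q` lists the vertices in an order `p` with
`D ≤ ν_p`. Hence `r(D) + 1 = min deg⁺(D' - ν_p)` over `D' ~ D` and injective `p`. Reversing `p`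
gives `ν_p + ν_{p̄} = K`, and `deg⁺(-E) = deg⁺ E - deg E` turns the formula into Riemann–Roch
`r(D) - r(K - D) = deg D - g + 1`. Clifford's inequality then follows from `r(K) = g - 1` and the
subadditivity of `r` on divisors of nonnegative rank. Finally `G^•` is connected, has the genus of
`G`, and extension by zero preserves degrees.
-/

namespace SimpleGraph

variable {V : Type} {G : SimpleGraph V}

lemma Connected.exists_adj_dist_add_one_s4 (hc : G.Connected) {q v : V} (hv : v ≠ q) :
    ∃ u, G.Adj v u ∧ G.dist q u + 1 = G.dist q v := by
  obtain ⟨p, hp⟩ := hc.exists_walk_length_eq_dist v q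
  cases p with
  | nil => exact absurd rfl hv
  | @cons _ u _ h t =>
    refine ⟨u, h, le_antisymm ?_ ?_⟩
    · rw [dist_comm, @dist_comm _ _ q v, ← hp, Walk.length_cons]
      exact Nat.succ_le_succ (dist_le t)
    · calc G.dist q v ≤ G.dist q u + G.dist u v := hc.dist_triangle
        _ = G.dist q u + 1 := by rw [dist_eq_one_iff_adj.2 h.symm]

lemma Connected.dist_lt_card [Fintype V] (hc : G.Connected) (u v : V) :
    G.dist u v < Fintype.card V := by
  obtain ⟨p, hp, hlen⟩ := hc.exists_path_of_dist u v
  exact hlen ▸ hp.length_lt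

end SimpleGraph

namespace ChipFiring

section Ordering

variable {V : Type} [DecidableEq V]

lemma injective_update_succ {p : V → ℕ} (hp : Function.Injective p) (v₀ : V) :
    Function.Injective (Function.update (p · + 1) v₀ 0) := by
  intro a b h
  by_cases ha : a = v₀ <;> by_cases hb : b = v₀ <;> simp_all [hp.eq_iff]

variable [Fintype V]

lemma insert_union_filter_lt_subset (S : Finset V) (p : V → ℕ) {v₀ v : V} (hv : v ≠ v₀) :
    insert v₀ S ∪ univ.filter (fun u => p u < p v) ⊆
      S ∪ univ.filter (fun u => Function.update (p · + 1) v₀ 0 u <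
        Function.update (p · + 1) v₀ 0 v) := by
  intro u hu
  by_cases hu₀ : u = v₀ <;> simp_all

theorem exists_injective_order {P : Finset V → V → Prop}
    (hP : ∀ ⦃B B' v⦄, B ⊆ B' → P B v → P B' v) (B₀ : Finset V)
    (hext : ∀ B, B₀ ⊆ B → B ≠ univ → ∃ v ∉ B, P B v) :
    ∃ p : V → ℕ, Function.Injective p ∧ ∀ v ∉ B₀, P (B₀ ∪ univ.filter (fun u => p u < p v)) v := by
  by_cases hB₀ : B₀ = univ
  · exact ⟨fun v => Fintype.equivFin V v, Fin.val_injective.comp (Fintype.equivFin V).injective,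
      by simp [hB₀]⟩
  obtain ⟨v₀, hv₀, hPv₀⟩ := hext B₀ subset_rfl hB₀
  obtain ⟨p, hp, hPp⟩ := exists_injective_order hP (insert v₀ B₀)
    fun B hB => hext B ((subset_insert _ _).trans hB)
  refine ⟨_, injective_update_succ hp v₀, fun v hv => ?_⟩
  by_cases hvv₀ : v = v₀
  · subst hvv₀; exact hP subset_union_left hPv₀
  · exact hP (insert_union_filter_lt_subset B₀ p hvv₀) (hPp v (by simp [hv, hvv₀]))
termination_by (B₀ᶜ).card
decreasing_by exact card_lt_card (compl_ssubset_compl.2 (ssubset_insert hv₀))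

end Ordering

variable {V : Type} [Fintype V] {M : V → V → ℕ}

section Laplacian

variable (M) in
def laplacian : (V → ℤ) →+ (V → ℤ) where
  toFun x v := ∑ u, (M v u : ℤ) * (x u - x v)
  map_zero' := by ext; simp
  map_add' x y := by
    ext v
    simp only [Pi.add_apply, ← Finset.sum_add_distrib]
    exact Finset.sum_congr rfl fun u _ => by ring

lemma laplacian_apply (x : V → ℤ) (v : V) :
    laplacian M x v = ∑ u, (M v u : ℤ) * (x u - x v) := rfl

lemma dotProduct_laplacian_comm (hs : ∀ u v, M u v = M v u) (x y : V → ℤ) :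
    y ⬝ᵥ laplacian M x = x ⬝ᵥ laplacian M y := by
  have expand : ∀ x y : V → ℤ, y ⬝ᵥ laplacian M x =
      (∑ v, ∑ u, (M v u : ℤ) * y v * x u) - ∑ v, ∑ u, (M v u : ℤ) * y v * x v := by
    intro x y
    simp only [dotProduct, laplacian_apply, Finset.mul_sum, ← Finset.sum_sub_distrib]
    exact Finset.sum_congr rfl fun v _ => Finset.sum_congr rfl fun u _ => by ring
  rw [expand, expand, Finset.sum_comm (f := fun v u => (M v u : ℤ) * y v * x u)]
  congr 1
  · exact Finset.sum_congr rfl fun v _ => Finset.sum_congr rfl fun u _ => by rw [hs]; ring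
  · exact Finset.sum_congr rfl fun v _ => Finset.sum_congr rfl fun u _ => by ring

lemma degDiv_add (d e : V → ℤ) : degDiv (d + e) = degDiv d + degDiv e := Finset.sum_add_distrib

lemma degDiv_sub (d e : V → ℤ) : degDiv (d - e) = degDiv d - degDiv e :=
  Finset.sum_sub_distrib _ _

lemma degDiv_nonneg {d : V → ℤ} (hd : Effective d) : 0 ≤ degDiv d :=
  Finset.sum_nonneg fun v _ => hd v

lemma degDiv_single [DecidableEq V] (w : V) (a : ℤ) : degDiv (Pi.single w a) = a := by
  simp [degDiv]

lemma degDiv_laplacian (hs : ∀ u v, M u v = M v u) (x : V → ℤ) :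
    degDiv (laplacian M x) = 0 := by
  have hconst : laplacian M 1 = 0 := by ext v; simp [laplacian_apply]
  rw [degDiv, ← one_dotProduct, dotProduct_laplacian_comm hs, hconst, dotProduct_zero]

lemma laplacian_apply_le_of_forall_le {x : V → ℤ} {v : V} (hmax : ∀ u, x u ≤ x v)
    (S : Finset V) (hS : ∀ u ∈ S, x u < x v) : laplacian M x v ≤ -∑ u ∈ S, (M v u : ℤ) := by
  classical
  calc laplacian M x v ≤ ∑ u, if u ∈ S then -(M v u : ℤ) else 0 := by
        refine Finset.sum_le_sum fun u _ => ?_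
        split_ifs with hu
        · nlinarith [hS u hu]
        · exact mul_nonpos_of_nonneg_of_nonpos (by positivity) (by linarith [hmax u])
    _ = -∑ u ∈ S, (M v u : ℤ) := by
        rw [Finset.sum_ite_mem, Finset.univ_inter, Finset.sum_neg_distrib]

lemma laplacian_apply_le_neg {h : V → ℤ} {v u₀ : V} {B t : ℤ} (hu₀ : 1 ≤ M v u₀) (ht : 0 ≤ t)
    (hdeg : ∑ u, (M v u : ℤ) ≤ B) (hdrop : h u₀ - h v ≤ -(B * t))
    (hrise : ∀ u, 0 < M v u → h u - h v ≤ t) : laplacian M h v ≤ -t := by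
  classical
  have hterm : ∀ u, (M v u : ℤ) * (h u - h v) ≤ M v u * t := by
    intro u
    rcases (M v u).eq_zero_or_pos with h0 | hpos
    · simp [h0]
    · exact mul_le_mul_of_nonneg_left (hrise u hpos) (by positivity)
  have hrest : ∑ u ∈ univ.erase u₀, (M v u : ℤ) * (h u - h v) ≤ (B - 1) * t := by
    calc ∑ u ∈ univ.erase u₀, (M v u : ℤ) * (h u - h v)
        ≤ ∑ u ∈ univ.erase u₀, (M v u : ℤ) * t := Finset.sum_le_sum fun u _ => hterm u
      _ = (∑ u, (M v u : ℤ) - M v u₀) * t := by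
        rw [← Finset.sum_mul, Finset.sum_erase_eq_sub (mem_univ _)]
      _ ≤ (B - 1) * t := by gcongr; omega
  have hBt : 0 ≤ B * t := mul_nonneg (le_trans (by positivity) hdeg) ht
  have hfirst : (M v u₀ : ℤ) * (h u₀ - h v) ≤ -(B * t) := by
    have : (1 : ℤ) ≤ M v u₀ := by exact_mod_cast hu₀
    nlinarith
  rw [laplacian_apply, ← Finset.add_sum_erase _ _ (mem_univ u₀)]
  linarith

end Laplacian

section Potential

variable (M) in
def degreeBound : ℤ := ∑ v, ∑ u, (M v u : ℤ) + 2

variable (M) in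
noncomputable def potential (q : V) : V → ℤ := fun v =>
  degreeBound M ^ Fintype.card V - degreeBound M ^ (Fintype.card V - (assocGraph M).dist q v)

lemma two_le_degreeBound : 2 ≤ degreeBound M := by
  have : 0 ≤ ∑ v, ∑ u, (M v u : ℤ) := by positivity
  unfold degreeBound; omega

lemma sum_le_degreeBound (v : V) : ∑ u, (M v u : ℤ) ≤ degreeBound M := by
  have := Finset.single_le_sum (f := fun w => ∑ u, (M w u : ℤ)) (fun _ _ => by positivity)
    (mem_univ v)
  unfold degreeBound; omega

lemma potential_self (q : V) : potential M q q = 0 := by simp [potential]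

lemma potential_nonneg (q v : V) : 0 ≤ potential M q v :=
  sub_nonneg.2 (pow_le_pow_right₀ (by linarith [two_le_degreeBound (M := M)]) (Nat.sub_le _ _))

/-- As `degreeBound M` exceeds every vertex degree, the drop of the potential towards `q` along
one edge outweighs its rise along all other edges at `v`. -/
lemma laplacian_potential_le (hs : ∀ u v, M u v = M v u) (hc : (assocGraph M).Connected)
    {q v : V} (hv : v ≠ q) : laplacian M (potential M q) v ≤ -1 := by
  set B := degreeBound M
  have hB : 2 ≤ B := two_le_degreeBound
  obtain ⟨u₀, hadj, hu₀⟩ := hc.exists_adj_dist_add_one_s4 hv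
  have hlt := hc.dist_lt_card q v
  -- the exponent `n - dist q ·` is `≥ e` at the neighbours of `v`, `e + 1` at `v`, `e + 2` at `u₀`
  set e := Fintype.card V - (assocGraph M).dist q v - 1
  have hX : 1 ≤ B ^ e := one_le_pow₀ (by omega)
  have hpv : potential M q v = B ^ Fintype.card V - B * B ^ e := by
    rw [potential, ← pow_succ']; congr 2; omega
  have hpu₀ : potential M q u₀ = B ^ Fintype.card V - B * (B * B ^ e) := by
    rw [potential, ← pow_succ', ← pow_succ']; congr 2; omega
  refine le_trans (laplacian_apply_le_neg (u₀ := u₀) (B := B) (t := (B - 1) * B ^ e) ?_ ?_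
    (sum_le_degreeBound v) ?_ ?_) ?_
  · rcases hadj.2 with h | h
    · exact_mod_cast h
    · rw [hs]; exact_mod_cast h
  · nlinarith
  · exact le_of_eq (by rw [hpu₀, hpv]; ring)
  · intro u hu
    by_cases huv : v = u
    · subst huv; nlinarith
    · have hadj : (assocGraph M).Adj v u := ⟨huv, Or.inl hu⟩
      have hdu : (assocGraph M).dist q u ≤ (assocGraph M).dist q v + 1 := by
        have := hc.dist_triangle (u := q) (v := v) (w := u)
        rwa [SimpleGraph.dist_eq_one_iff_adj.2 hadj] at this
      have : B ^ e ≤ B ^ (Fintype.card V - (assocGraph M).dist q u) :=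
        pow_le_pow_right₀ (by omega) (by omega)
      rw [potential, hpv]
      nlinarith
  · nlinarith

def IsEffectiveOff (q : V) (D : V → ℤ) : Prop := ∀ v, v ≠ q → 0 ≤ D v

lemma exists_isEffectiveOff_add_laplacian (hs : ∀ u v, M u v = M v u)
    (hc : (assocGraph M).Connected) (q : V) (D : V → ℤ) :
    ∃ x, IsEffectiveOff q (D + laplacian M x) := by
  set c := ∑ v, |D v|
  refine ⟨-(c • potential M q), fun v hv => ?_⟩
  have hcv : |D v| ≤ c := Finset.single_le_sum (f := fun v => |D v|) (fun _ _ => abs_nonneg _)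
    (mem_univ v)
  have hlap := laplacian_potential_le hs hc hv
  simp only [Pi.add_apply, map_neg, map_zsmul, Pi.neg_apply, Pi.smul_apply, smul_eq_mul]
  nlinarith [neg_abs_le (D v), abs_nonneg (D v)]

lemma exists_minimal_dotProduct_potential (hs : ∀ u v, M u v = M v u)
    (hc : (assocGraph M).Connected) (q : V) (D : V → ℤ) :
    ∃ x₀, IsEffectiveOff q (D + laplacian M x₀) ∧ ∀ x,
      IsEffectiveOff q (D + laplacian M x₀ + laplacian M x) →
        (D + laplacian M x₀) ⬝ᵥ potential M q ≤
          (D + laplacian M x₀ + laplacian M x) ⬝ᵥ potential M q := by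
  have hbdd : ∀ x, IsEffectiveOff q (D + laplacian M x) →
      0 ≤ (D + laplacian M x) ⬝ᵥ potential M q := by
    intro x hx
    refine Finset.sum_nonneg fun v _ => ?_
    by_cases hv : v = q
    · simp [hv, potential_self]
    · exact mul_nonneg (hx v hv) (potential_nonneg q v)
  obtain ⟨_, ⟨x₀, hx₀, rfl⟩, hmin⟩ := Int.exists_least_of_bdd
    (P := fun z => ∃ x, IsEffectiveOff q (D + laplacian M x) ∧
      z = (D + laplacian M x) ⬝ᵥ potential M q)
    ⟨0, by rintro _ ⟨x, hx, rfl⟩; exact hbdd x hx⟩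
    (let ⟨x, hx⟩ := exists_isEffectiveOff_add_laplacian hs hc q D; ⟨_, x, hx, rfl⟩)
  refine ⟨x₀, hx₀, fun x hx => hmin _ ⟨x₀ + x, ?_, ?_⟩⟩
  · rwa [map_add, ← add_assoc]
  · rw [map_add, ← add_assoc]

end Potential

section Nu

variable (M) in
/-- `ν_p(v) = indeg(v) - 1` for the acyclic orientation directing each edge towards its
`p`-larger endpoint. -/
def nu (p : V → ℕ) : V → ℤ := fun v => (∑ u with p u < p v, (M v u : ℤ)) - 1

lemma not_effective_nu_add_laplacian [Nonempty V] (p : V → ℕ) (x : V → ℤ) :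
    ¬ Effective (nu M p + laplacian M x) := by
  intro h
  obtain ⟨w, -, hw⟩ := Finset.exists_max_image univ x univ_nonempty
  obtain ⟨v, hv, hvmin⟩ := Finset.exists_min_image (univ.filter (fun u => x u = x w)) p
    ⟨w, by simp⟩
  have hmax : ∀ u, x u ≤ x v := fun u => (mem_filter.1 hv).2 ▸ hw u (mem_univ u)
  have hlt : ∀ u ∈ univ.filter (fun u => p u < p v), x u < x v := by
    intro u hu
    refine (hmax u).lt_of_ne fun he => (hvmin u ?_).not_gt (mem_filter.1 hu).2
    simpa [he] using hv
  have := laplacian_apply_le_of_forall_le (M := M) hmax _ hlt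
  have := h v
  simp only [Pi.add_apply, nu] at this
  linarith

variable (M) in
def canonical : V → ℤ := fun v => ∑ u, (M v u : ℤ) - 2

def reverse (p : V → ℕ) : V → ℕ := fun v => univ.sup p - p v

lemma reverse_lt_reverse {p : V → ℕ} {u v : V} : reverse p u < reverse p v ↔ p v < p u := by
  have hu : p u ≤ univ.sup p := le_sup (mem_univ u)
  have hv : p v ≤ univ.sup p := le_sup (mem_univ v)
  unfold reverse; omega

lemma reverse_injective {p : V → ℕ} (hp : Function.Injective p) :
    Function.Injective (reverse p) := fun _ _ h =>
  hp (le_antisymm (not_lt.1 fun h' => (reverse_lt_reverse.2 h').ne h)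
    (not_lt.1 fun h' => (reverse_lt_reverse.2 h').ne h.symm))

lemma nu_add_nu_reverse (hd : ∀ v, M v v = 0) {p : V → ℕ} (hp : Function.Injective p) :
    nu M p + nu M (reverse p) = canonical M := by
  ext v
  have hsplit : ∀ u, (M v u : ℤ) =
      (if p u < p v then (M v u : ℤ) else 0) + (if p v < p u then (M v u : ℤ) else 0) := by
    intro u
    rcases lt_trichotomy (p u) (p v) with h | h | h
    · simp [h, h.not_gt]
    · simp [hp h, hd]
    · simp [h, h.not_gt]
  simp only [nu, canonical, Pi.add_apply, reverse_lt_reverse, Finset.sum_filter]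
  rw [Finset.sum_congr rfl fun u _ => hsplit u, Finset.sum_add_distrib]
  ring

lemma degDiv_nu_reverse (hs : ∀ u v, M u v = M v u) (p : V → ℕ) :
    degDiv (nu M (reverse p)) = degDiv (nu M p) := by
  simp only [degDiv, nu, Finset.sum_sub_distrib, reverse_lt_reverse, Finset.sum_filter]
  rw [Finset.sum_comm]
  simp only [hs]

lemma degDiv_nu (hs : ∀ u v, M u v = M v u) (hd : ∀ v, M v v = 0) {p : V → ℕ}
    (hp : Function.Injective p) : degDiv (nu M p) = genusW M 0 - 1 := by
  have h2 : 2 * degDiv (nu M p) = ∑ u, ∑ v, (M u v : ℤ) - 2 * Fintype.card V := by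
    rw [two_mul]
    nth_rewrite 2 [← degDiv_nu_reverse hs p]
    rw [← degDiv_add, nu_add_nu_reverse hd hp]
    simp [degDiv, canonical, Finset.sum_sub_distrib, mul_comm]
  simp only [genusW, hd, Pi.zero_apply, Nat.cast_zero, Finset.sum_const_zero, add_zero]
  omega

lemma degDiv_canonical (hs : ∀ u v, M u v = M v u) (hd : ∀ v, M v v = 0) :
    degDiv (canonical M) = 2 * genusW M 0 - 2 := by
  have hp : Function.Injective fun v => (Fintype.equivFin V v : ℕ) :=
    Fin.val_injective.comp (Fintype.equivFin V).injective
  rw [← nu_add_nu_reverse hd hp, degDiv_add, degDiv_nu hs hd hp,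
    degDiv_nu hs hd (reverse_injective hp)]
  ring

end Nu

section DegPlus

def degPlus (E : V → ℤ) : ℤ := ∑ v, max (E v) 0

lemma degPlus_nonneg (E : V → ℤ) : 0 ≤ degPlus E :=
  Finset.sum_nonneg fun _ _ => le_max_right _ _

lemma degPlus_neg (E : V → ℤ) : degPlus (-E) = degPlus E - degDiv E := by
  rw [degPlus, degPlus, degDiv, ← Finset.sum_sub_distrib]
  exact Finset.sum_congr rfl fun v _ => by simp only [Pi.neg_apply]; omega

lemma degPlus_le_degDiv {E e : V → ℤ} (he : Effective e) (hle : E ≤ e) : degPlus E ≤ degDiv e :=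
  Finset.sum_le_sum fun v _ => max_le (hle v) (he v)

lemma exists_effective_ge_of_degPlus_le [Nonempty V] {E : V → ℤ} {k : ℤ} (hk : degPlus E ≤ k) :
    ∃ e, Effective e ∧ degDiv e = k ∧ E ≤ e := by
  classical
  obtain ⟨w⟩ := ‹Nonempty V›
  have hsingle : 0 ≤ (Pi.single w (k - degPlus E) : V → ℤ) := Pi.single_nonneg.2 (sub_nonneg.2 hk)
  refine ⟨(fun v => max (E v) 0) + Pi.single w (k - degPlus E), fun v => ?_, ?_, fun v => ?_⟩
  · exact add_nonneg (le_max_right _ _) (hsingle v)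
  · rw [degDiv_add, degDiv_single]; simp [degDiv, degPlus]
  · exact (le_max_left _ _).trans (le_add_of_nonneg_right (hsingle v))

lemma exists_effective_le_of_le_degDiv {e : V → ℤ} (he : Effective e) (k : ℕ)
    (hk : (k : ℤ) ≤ degDiv e) : ∃ e₁, Effective e₁ ∧ e₁ ≤ e ∧ degDiv e₁ = k := by
  classical
  induction k with
  | zero => exact ⟨0, fun _ => le_rfl, he, by simp [degDiv]⟩
  | succ k ih =>
    obtain ⟨e₁, he₁, hle, hdeg⟩ := ih (by omega)
    obtain ⟨w, hw⟩ : ∃ w, e₁ w < e w := by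
      by_contra! h
      have : degDiv e ≤ degDiv e₁ := Finset.sum_le_sum fun v _ => h v
      omega
    have hsingle : 0 ≤ (Pi.single w 1 : V → ℤ) := Pi.single_nonneg.2 zero_le_one
    refine ⟨e₁ + Pi.single w 1, fun v => add_nonneg (he₁ v) (hsingle v),
      fun v => ?_, by rw [degDiv_add, degDiv_single, hdeg]; push_cast; ring⟩
    by_cases hv : v = w
    · subst hv; simpa using hw
    · simpa [hv] using hle v

end DegPlus

variable [DecidableEq V]

section LinearEquivalence

def indicatorDiv (Z : Finset V) : V → ℤ := fun v => if v ∈ Z then 1 else 0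

lemma indicatorDiv_dotProduct (A : Finset V) (f : V → ℤ) :
    indicatorDiv A ⬝ᵥ f = ∑ v ∈ A, f v := by
  simp [indicatorDiv, dotProduct, Finset.sum_ite_mem]

variable (M) in
lemma tZ_eq_laplacian_indicatorDiv (Z : Finset V) : tZ M Z = laplacian M (indicatorDiv Z) := by
  ext v
  have hsplit := Finset.sum_add_sum_compl Z (fun u => (M v u : ℤ))
  have hZ : ∑ u, (M v u : ℤ) * indicatorDiv Z u = ∑ u ∈ Z, (M v u : ℤ) := by
    simp [indicatorDiv, Finset.sum_ite_mem]
  simp only [laplacian_apply, mul_sub, Finset.sum_sub_distrib, hZ, ← Finset.sum_mul]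
  by_cases hv : v ∈ Z
  · simp [tZ, indicatorDiv, hv]; linarith
  · simp [tZ, indicatorDiv, hv]

variable (M) in
lemma closure_range_tZ : AddSubgroup.closure (Set.range (tZ M)) = (laplacian M).range := by
  refine le_antisymm ((AddSubgroup.closure_le _).2 ?_) ?_
  · rintro _ ⟨Z, rfl⟩
    exact ⟨_, (tZ_eq_laplacian_indicatorDiv M Z).symm⟩
  · rintro _ ⟨x, rfl⟩
    rw [← Finset.univ_sum_single x, map_sum]
    refine AddSubgroup.sum_mem _ fun v _ => ?_
    have : Pi.single v (x v) = x v • indicatorDiv {v} := by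
      ext w; by_cases h : w = v <;> simp [indicatorDiv, h]
    rw [this, map_zsmul, ← tZ_eq_laplacian_indicatorDiv]
    exact AddSubgroup.zsmul_mem _ (AddSubgroup.subset_closure (Set.mem_range_self _)) _

lemma exists_effective_linEquiv_iff (d : V → ℤ) :
    (∃ f, Effective f ∧ LinEquiv M d f) ↔ ∃ x, Effective (d + laplacian M x) := by
  simp only [LinEquiv, closure_range_tZ, AddMonoidHom.mem_range]
  constructor
  · rintro ⟨f, hf, x, hx⟩
    refine ⟨-x, ?_⟩
    rwa [map_neg, hx, ← sub_eq_add_neg, sub_sub_cancel]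
  · rintro ⟨x, hx⟩
    exact ⟨_, hx, -x, by rw [map_neg]; abel⟩

end LinearEquivalence

section Reduction

/-- Dhar's burning criterion: otherwise firing `Bᶜ` keeps `D` effective off `q` and lowers its
potential. -/
lemma exists_lt_sum_of_minimal (hs : ∀ u v, M u v = M v u) (hc : (assocGraph M).Connected)
    {q : V} {D : V → ℤ} (hD : IsEffectiveOff q D)
    (hmin : ∀ x, IsEffectiveOff q (D + laplacian M x) →
      D ⬝ᵥ potential M q ≤ (D + laplacian M x) ⬝ᵥ potential M q)
    {B : Finset V} (hqB : q ∈ B) (hB : B ≠ univ) : ∃ v ∉ B, D v < ∑ u ∈ B, (M v u : ℤ) := by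
  by_contra! hle
  have heff : IsEffectiveOff q (D + laplacian M (indicatorDiv Bᶜ)) := by
    intro v hv
    rw [Pi.add_apply, ← tZ_eq_laplacian_indicatorDiv]
    by_cases hvB : v ∈ B
    · have : 0 ≤ tZ M Bᶜ v := by simp [tZ, hvB]; positivity
      linarith [hD v hv]
    · simpa [tZ, hvB] using hle v hvB
  have hdrop : ∑ v ∈ Bᶜ, laplacian M (potential M q) v < 0 := by
    have hne : (Bᶜ).Nonempty := Finset.nonempty_iff_ne_empty.2 (by rwa [Ne, compl_eq_empty_iff])
    calc ∑ v ∈ Bᶜ, laplacian M (potential M q) v ≤ ∑ v ∈ Bᶜ, (-1 : ℤ) :=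
          Finset.sum_le_sum fun v hv =>
            laplacian_potential_le hs hc (by rintro rfl; exact mem_compl.1 hv hqB)
      _ < 0 := by simpa using hne.card_pos
  have := hmin _ heff
  rw [add_dotProduct, dotProduct_comm (laplacian M _), dotProduct_laplacian_comm hs,
    indicatorDiv_dotProduct] at this
  linarith

theorem exists_effective_nu_sub_add_laplacian (hs : ∀ u v, M u v = M v u)
    (hc : (assocGraph M).Connected) (D : V → ℤ) (hD : ∀ x, ¬ Effective (D + laplacian M x)) :
    ∃ p, Function.Injective p ∧ ∃ x, Effective (nu M p - D + laplacian M x) := by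
  obtain ⟨q⟩ := hc.nonempty
  obtain ⟨x₀, hoff, hmin⟩ := exists_minimal_dotProduct_potential hs hc q D
  set D' := D + laplacian M x₀
  have hq : D' q < 0 := by
    by_contra! h
    exact hD x₀ fun v => if hv : v = q then hv ▸ h else hoff v hv
  have hmono : ∀ ⦃B B' : Finset V⦄ ⦃v⦄, B ⊆ B' →
      D' v < ∑ u ∈ B, (M v u : ℤ) → D' v < ∑ u ∈ B', (M v u : ℤ) := fun B B' v hBB' h =>
    h.trans_le (Finset.sum_le_sum_of_subset_of_nonneg hBB' fun _ _ _ => by positivity)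
  obtain ⟨p, hp, hlt⟩ := exists_injective_order hmono {q} fun B hB hBu =>
    exists_lt_sum_of_minimal hs hc hoff hmin (hB (mem_singleton_self q)) hBu
  refine ⟨_, injective_update_succ hp q, -x₀, fun v => ?_⟩
  have hval : (nu M (Function.update (p · + 1) q 0) - D + laplacian M (-x₀)) v =
      nu M (Function.update (p · + 1) q 0) v - D' v := by
    simp only [D', Pi.add_apply, Pi.sub_apply, map_neg, Pi.neg_apply]; ring
  rw [hval]
  by_cases hv : v = q
  · subst hv
    have : 0 ≤ ∑ u with Function.update (p · + 1) v 0 u < Function.update (p · + 1) v 0 v,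
        (M v u : ℤ) := by positivity
    simp only [nu]; omega
  · have := hmono (insert_union_filter_lt_subset ∅ p hv)
      (by simpa using hlt v (by simpa using hv))
    simp only [nu, empty_union] at this ⊢
    omega

end Reduction

section Rank

lemma mem_bnRankSet_iff {D : V → ℤ} {k : ℤ} : k ∈ bnRankSet M D ↔ k = -1 ∨
    (0 ≤ k ∧ ∀ e, Effective e → degDiv e = k → ∃ x, Effective (D - e + laplacian M x)) := by
  simp only [bnRankSet, Set.mem_ofPred_eq, exists_effective_linEquiv_iff]

variable (hs : ∀ u v, M u v = M v u) [Nonempty V] (D : V → ℤ)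
include hs

lemma le_max_of_mem_bnRankSet {k : ℤ} (hk : k ∈ bnRankSet M D) : k ≤ max (-1) (degDiv D) := by
  rcases mem_bnRankSet_iff.1 hk with rfl | ⟨hk0, h⟩
  · exact le_max_left _ _
  · obtain ⟨e, he, hdeg, -⟩ := exists_effective_ge_of_degPlus_le (E := (0 : V → ℤ)) (k := k)
      (by simpa [degPlus] using hk0)
    obtain ⟨x, hx⟩ := h e he hdeg
    have := degDiv_nonneg hx
    rw [degDiv_add, degDiv_sub, degDiv_laplacian hs, hdeg] at this
    exact le_max_of_le_right (by linarith)

lemma bddAbove_bnRankSet : BddAbove (bnRankSet M D) :=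
  ⟨_, fun _ => le_max_of_mem_bnRankSet hs D⟩

lemma le_bnRank {k : ℤ} (hk : k ∈ bnRankSet M D) : k ≤ bnRank M D :=
  le_csSup (bddAbove_bnRankSet hs D) hk

lemma neg_one_le_bnRank : -1 ≤ bnRank M D := le_bnRank hs D (Or.inl rfl)

lemma bnRank_le_max : bnRank M D ≤ max (-1) (degDiv D) :=
  le_max_of_mem_bnRankSet hs D (Int.csSup_mem ⟨-1, Or.inl rfl⟩ (bddAbove_bnRankSet hs D))

lemma exists_effective_sub_add_laplacian {e : V → ℤ} (h0 : 0 ≤ bnRank M D) (he : Effective e)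
    (hdeg : degDiv e = bnRank M D) : ∃ x, Effective (D - e + laplacian M x) := by
  rcases mem_bnRankSet_iff.1 (Int.csSup_mem ⟨-1, Or.inl rfl⟩ (bddAbove_bnRankSet hs D)) with
    h | ⟨-, h⟩
  · exact absurd h (by unfold bnRank at h0; omega)
  · exact h e he hdeg

lemma exists_effective_forall_not_effective :
    ∃ e, Effective e ∧ degDiv e = bnRank M D + 1 ∧
      ∀ x, ¬ Effective (D - e + laplacian M x) := by
  have hnot : bnRank M D + 1 ∉ bnRankSet M D := fun h => by linarith [le_bnRank hs D h]
  rw [mem_bnRankSet_iff] at hnot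
  push Not at hnot
  exact hnot.2 (by linarith [neg_one_le_bnRank hs D])

theorem bnRank_add_one_le_degPlus (p : V → ℕ) (x : V → ℤ) :
    bnRank M D + 1 ≤ degPlus (D + laplacian M x - nu M p) := by
  by_contra! h
  obtain ⟨e, he, hdeg, hle⟩ := exists_effective_ge_of_degPlus_le (Int.le_of_lt_add_one h)
  obtain ⟨z, hz⟩ := exists_effective_sub_add_laplacian hs D
    ((degPlus_nonneg _).trans (Int.le_of_lt_add_one h)) he hdeg
  refine not_effective_nu_add_laplacian (M := M) p (z - x) fun v => ?_
  have h1 := hz v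
  have h2 := hle v
  simp only [Pi.add_apply, Pi.sub_apply, map_sub] at h1 h2 ⊢
  linarith

omit [Nonempty V] in
theorem exists_degPlus_le_bnRank_add_one (hc : (assocGraph M).Connected) :
    ∃ p, Function.Injective p ∧ ∃ x, degPlus (D + laplacian M x - nu M p) ≤ bnRank M D + 1 := by
  have := hc.nonempty
  obtain ⟨e, he, hdeg, hne⟩ := exists_effective_forall_not_effective hs D
  obtain ⟨p, hp, x, hx⟩ := exists_effective_nu_sub_add_laplacian hs hc (D - e) hne
  refine ⟨p, hp, -x, hdeg ▸ degPlus_le_degDiv he fun v => ?_⟩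
  have := hx v
  simp only [Pi.add_apply, Pi.sub_apply, map_neg, Pi.neg_apply] at this ⊢
  linarith

end Rank

section RiemannRoch

variable (hs : ∀ u v, M u v = M v u) (hd : ∀ v, M v v = 0) (hc : (assocGraph M).Connected)
include hs hd hc

lemma bnRank_canonical_sub_le (D : V → ℤ) :
    bnRank M (canonical M - D) ≤ bnRank M D + genusW M 0 - 1 - degDiv D := by
  have := hc.nonempty
  obtain ⟨p, hp, x, hx⟩ := exists_degPlus_le_bnRank_add_one hs D hc
  have hK := bnRank_add_one_le_degPlus hs (canonical M - D) (reverse p) (-x)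
  have heq : canonical M - D + laplacian M (-x) - nu M (reverse p) =
      -(D + laplacian M x - nu M p) := by
    rw [← nu_add_nu_reverse hd hp, map_neg]; abel
  rw [heq, degPlus_neg, degDiv_sub, degDiv_add, degDiv_laplacian hs, degDiv_nu hs hd hp] at hK
  linarith

theorem bnRank_sub_bnRank_canonical_sub (D : V → ℤ) :
    bnRank M D - bnRank M (canonical M - D) = degDiv D - genusW M 0 + 1 := by
  have h1 := bnRank_canonical_sub_le hs hd hc D
  have h2 := bnRank_canonical_sub_le hs hd hc (canonical M - D)
  rw [sub_sub_cancel, degDiv_sub, degDiv_canonical hs hd] at h2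
  linarith

end RiemannRoch

section Clifford

variable (hs : ∀ u v, M u v = M v u)
include hs

lemma bnRank_add_bnRank_le [Nonempty V] {D₁ D₂ : V → ℤ} (h₁ : 0 ≤ bnRank M D₁)
    (h₂ : 0 ≤ bnRank M D₂) : bnRank M D₁ + bnRank M D₂ ≤ bnRank M (D₁ + D₂) := by
  refine le_bnRank hs _ (mem_bnRankSet_iff.2 (Or.inr ⟨by omega, fun e he hdeg => ?_⟩))
  obtain ⟨e₁, he₁, hle, hdeg₁⟩ :=
    exists_effective_le_of_le_degDiv he (bnRank M D₁).toNat (by omega)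
  rw [Int.toNat_of_nonneg h₁] at hdeg₁
  obtain ⟨x₁, hx₁⟩ := exists_effective_sub_add_laplacian hs D₁ h₁ he₁ hdeg₁
  obtain ⟨x₂, hx₂⟩ := exists_effective_sub_add_laplacian hs D₂ h₂ (e := e - e₁)
    (fun v => sub_nonneg.2 (hle v)) (by rw [degDiv_sub]; omega)
  refine ⟨x₁ + x₂, fun v => ?_⟩
  have : D₁ + D₂ - e + laplacian M (x₁ + x₂) =
      (D₁ - e₁ + laplacian M x₁) + (D₂ - (e - e₁) + laplacian M x₂) := by
    rw [map_add]; abel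
  rw [this]
  exact add_nonneg (hx₁ v) (hx₂ v)

theorem two_mul_bnRank_le_degDiv (hd : ∀ v, M v v = 0) (hc : (assocGraph M).Connected)
    {D : V → ℤ} (h0 : 0 ≤ degDiv D) (h1 : degDiv D ≤ 2 * genusW M 0 - 2) :
    2 * bnRank M D ≤ degDiv D := by
  have := hc.nonempty
  have hRR := bnRank_sub_bnRank_canonical_sub hs hd hc D
  rcases le_or_gt (bnRank M D) 0 with hD | hD
  · omega
  rcases lt_or_ge (bnRank M (canonical M - D)) 0 with hKD | hKD
  · linarith [neg_one_le_bnRank hs (canonical M - D)]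
  have hadd := bnRank_add_bnRank_le hs hD.le hKD
  rw [add_sub_cancel] at hadd
  have hK := bnRank_sub_bnRank_canonical_sub hs hd hc 0
  have h00 := bnRank_le_max hs (0 : V → ℤ)
  simp only [sub_zero, degDiv, Pi.zero_apply, Finset.sum_const_zero] at hK h00
  omega

end Clifford

end ChipFiring

section Bullet

variable {V : Type} [DecidableEq V] (ω : V → ℕ) (m : V → V → ℕ)

lemma bulletM_self (a : BV ω m) : bulletM ω m a a = 0 := by
  rcases a with u | ⟨v, i⟩ <;> simp [bulletM]

lemma bulletM_comm (hsymm : ∀ u v, m u v = m v u) (a b : BV ω m) :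
    bulletM ω m a b = bulletM ω m b a := by
  rcases a with u | ⟨u, i⟩ <;> rcases b with v | ⟨v, j⟩ <;> simp [bulletM, hsymm u v, eq_comm]

lemma connected_assocGraph_bulletM (hconn : (assocGraph m).Connected) :
    (assocGraph (bulletM ω m)).Connected := by
  set G := assocGraph (bulletM ω m)
  let embed : assocGraph m →g G :=
    ⟨Sum.inl, fun {u v} ⟨hne, h⟩ =>
      ⟨by simpa using hne, by simpa [bulletM, hne, Ne.symm hne] using h⟩⟩
  have hleaf : ∀ v i, G.Adj (Sum.inr ⟨v, i⟩) (Sum.inl v) := fun v i => ⟨by simp, by simp [bulletM]⟩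
  obtain ⟨v₀⟩ := hconn.nonempty
  have hbase : ∀ a, G.Reachable a (Sum.inl v₀) := by
    rintro (u | ⟨u, i⟩)
    · exact (hconn.preconnected u v₀).map embed
    · exact (hleaf u i).reachable.trans ((hconn.preconnected u v₀).map embed)
  exact (SimpleGraph.connected_iff G).2 ⟨fun a b => (hbase a).trans (hbase b).symm, ⟨Sum.inl v₀⟩⟩

variable [Fintype V]

omit [DecidableEq V] in
lemma degDiv_iota (d : V → ℤ) : degDiv (iota ω m d) = degDiv d := by
  simp [degDiv, Fintype.sum_sum_type, iota]

lemma sum_sum_bulletM : ∑ a, ∑ b, (bulletM ω m a b : ℤ) =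
    ∑ u, ∑ v, (m u v : ℤ) - ∑ v, (m v v : ℤ) + 4 * ∑ v, ((ω v : ℤ) + m v v) := by
  have hoff : ∀ u, (∑ v, if u = v then 0 else (m u v : ℤ)) = ∑ v, (m u v : ℤ) - m u u := by
    intro u
    rw [← Finset.sum_erase_eq_sub (mem_univ u), Finset.sum_ite, Finset.sum_const_zero, zero_add,
      Finset.filter_ne]
  simp [Fintype.sum_sum_type, Fintype.sum_sigma, bulletM, apply_ite, hoff, Finset.sum_add_distrib,
    Finset.sum_sub_distrib, ← Finset.sum_mul]
  ring

lemma genusW_bulletM : genusW (bulletM ω m) 0 = genusW m ω := by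
  have hcard : (Fintype.card (BV ω m) : ℤ) = Fintype.card V + ∑ v, ((ω v : ℤ) + m v v) := by
    simp [Fintype.card_sigma]
  simp only [genusW, sum_sum_bulletM, bulletM_self, hcard, Finset.sum_add_distrib, Pi.zero_apply,
    Nat.cast_zero, Finset.sum_const_zero]
  omega

end Bullet

/-- **Clifford inequality for weighted graphs with loops.** -/
theorem wRank_clifford {V : Type} [Fintype V] [DecidableEq V]
    (ω : V → ℕ) (m : V → V → ℕ) (hsymm : ∀ u v, m u v = m v u)
    (hconn : (assocGraph m).Connected)
    (d : V → ℤ) (h0 : 0 ≤ degDiv d) (h1 : degDiv d ≤ 2 * genusW m ω - 2) :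
    2 * wRank ω m d ≤ degDiv d := by
  have h := ChipFiring.two_mul_bnRank_le_degDiv (bulletM_comm ω m hsymm) (bulletM_self ω m)
    (connected_assocGraph_bulletM ω m hconn) (D := iota ω m d)
    (by rwa [degDiv_iota]) (by rwa [degDiv_iota, genusW_bulletM])
  rwa [degDiv_iota] at h
end

section
/- Existence of semibalanced representatives (Caporaso): Let G be a semistable connected weighted graph of genus g ≥ 2, i.e., every vertex v with ω(v) = 0 has val(v) ≥ 2. Then every divisor d on G is linearly equivalent to a semibalanced divisor, i.e., to a divisor d' such that for every subset Z ⊆ V: deg(d)·k_G(Z)/(2g−2) − (Z·Z^c)/2 ≤ d'(Z) ≤ deg(d)·k_G(Z)/(2g−2) + (Z·Z^c)/2, where these inequalities are among rational numbers, d'(Z) = Σ_{v∈Z} d'(v), k_G(Z) = Σ_{v∈Z} k_G(v), and Z·Z^c = Σ_{v∈Z, u∉Z} m(v,u). -/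
open Finset

/-!
The polarization `q = deg d · k_G / (2g - 2)` has total degree `deg d`, so on the connected
graph `d - q = L φ` for a rational potential `φ`, where `L` is the Laplacian. Replacing `d` by
`d - L f` with `f : V → ℤ` stays in the class of `d` and replaces `φ` by `φ - f`; choose `f`
minimizing the Dirichlet energy `⟨ψ, L ψ⟩` of `ψ = φ - f` (scaled by `N²`, where `N φ` is
integral, these energies are natural numbers, so a minimum exists). As
`energy (ψ ± 1_Z) = energy ψ ± 2 (d' - q)(Z) + Z·Zᶜ`, minimality of `ψ` gives
`|(d' - q)(Z)| ≤ Z·Zᶜ / 2` for the new divisor `d'`.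
-/

lemma SimpleGraph.Reachable.eq_of_forall_adj {V α : Type*} {G : SimpleGraph V} {f : V → α}
    (hf : ∀ u v, G.Adj u v → f u = f v) {u v : V} (h : G.Reachable u v) : f u = f v := by
  obtain ⟨p⟩ := h
  induction p with
  | nil => rfl
  | cons hadj _ ih => exact (hf _ _ hadj).trans ih

lemma exists_natCast_mul_eq_intCast {ι : Type*} [Fintype ι] (φ : ι → ℚ) :
    ∃ N : ℕ, 0 < N ∧ ∀ i, ∃ z : ℤ, (N : ℚ) * φ i = z := by
  refine ⟨∏ i, (φ i).den, prod_pos fun i _ => (φ i).den_pos, fun i => ?_⟩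
  obtain ⟨c, hc⟩ := dvd_prod_of_mem (fun i => (φ i).den) (mem_univ i)
  refine ⟨c * (φ i).num, ?_⟩
  rw [hc]
  push_cast
  rw [mul_comm ((φ i).den : ℚ), mul_assoc, Rat.den_mul_eq_num]

lemma exists_forall_le_of_mul_eq_intCast {α K : Type*} [Nonempty α] [Field K] [LinearOrder K]
    [IsStrictOrderedRing K] {g : α → K} {N : K} (hN : 0 < N) (hg : ∀ a, 0 ≤ g a)
    (hint : ∀ a, ∃ z : ℤ, N * g a = z) : ∃ a, ∀ b, g a ≤ g b := by
  choose z hz using hint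
  obtain ⟨_, ⟨a, rfl⟩, hmin⟩ := Int.exists_least_of_bdd (P := fun k => ∃ a, z a = k)
    ⟨0, by
      rintro _ ⟨a, rfl⟩
      have : (0 : K) ≤ z a := hz a ▸ mul_nonneg hN.le (hg a)
      exact_mod_cast this⟩
    ⟨_, Classical.arbitrary α, rfl⟩
  refine ⟨a, fun b => le_of_mul_le_mul_left ?_ hN⟩
  rw [hz, hz]
  exact_mod_cast hmin _ ⟨b, rfl⟩

namespace WeightedGraph

variable {V : Type} [Fintype V]

section Laplacian

variable (R : Type*) [CommRing R] (m : V → V → ℕ)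

def laplacian : (V → R) →ₗ[R] V → R where
  toFun f v := ∑ u, (m v u : R) * (f v - f u)
  map_add' f g := by
    ext v
    simp only [Pi.add_apply, ← sum_add_distrib]
    exact sum_congr rfl fun u _ => by ring
  map_smul' c f := by
    ext v
    simp only [Pi.smul_apply, smul_eq_mul, mul_sum, RingHom.id_apply]
    exact sum_congr rfl fun u _ => by ring

@[simp]
lemma laplacian_apply (f : V → R) (v : V) :
    laplacian R m f v = ∑ u, (m v u : R) * (f v - f u) := rfl

def energy (f : V → R) : R := ∑ v, f v * laplacian R m f v

def edgeCut [DecidableEq V] (Z : Finset V) : ℕ := ∑ v ∈ Z, ∑ u ∈ Zᶜ, m v u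

variable {R m}

lemma laplacian_map {S : Type*} [CommRing S] (φ : R →+* S) (f : V → R) :
    laplacian S m (φ ∘ f) = φ ∘ laplacian R m f := by
  ext v
  simp

lemma energy_map {S : Type*} [CommRing S] (φ : R →+* S) (f : V → R) :
    energy S m (φ ∘ f) = φ (energy R m f) := by
  simp [energy]

lemma energy_smul (c : R) (f : V → R) : energy R m (c • f) = c ^ 2 * energy R m f := by
  simp only [energy, map_smul, Pi.smul_apply, smul_eq_mul, mul_sum]
  exact sum_congr rfl fun v _ => by ring

lemma energy_neg (f : V → R) : energy R m (-f) = energy R m f := by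
  simp only [energy, map_neg, Pi.neg_apply, neg_mul_neg]

section Symmetric

variable (hsymm : ∀ u v, m u v = m v u)
include hsymm

lemma sum_sum_mul_swap (F : V → V → R) :
    ∑ v, ∑ u, (m v u : R) * F v u = ∑ v, ∑ u, (m v u : R) * F u v := by
  rw [sum_comm]
  exact sum_congr rfl fun v _ => sum_congr rfl fun u _ => by rw [hsymm]

lemma sum_laplacian_eq_zero (f : V → R) : ∑ v, laplacian R m f v = 0 := by
  simp only [laplacian_apply, mul_sub, sum_sub_distrib, sub_eq_zero]
  exact sum_sum_mul_swap hsymm fun v _ => f v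

lemma sum_mul_laplacian_comm (f g : V → R) :
    ∑ v, g v * laplacian R m f v = ∑ v, f v * laplacian R m g v := by
  refine sub_eq_zero.1 (Eq.trans ?_ (sub_eq_zero.2 (sum_sum_mul_swap hsymm fun v u => f v * g u)))
  simp only [laplacian_apply, mul_sum, ← sum_sub_distrib]
  exact sum_congr rfl fun v _ => sum_congr rfl fun u _ => by ring

lemma energy_add (f g : V → R) :
    energy R m (f + g) = energy R m f + 2 * ∑ v, g v * laplacian R m f v + energy R m g := by
  simp only [energy, map_add, Pi.add_apply, add_mul, mul_add, sum_add_distrib,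
    sum_mul_laplacian_comm hsymm f g]
  ring

lemma two_mul_energy (f : V → R) :
    2 * energy R m f = ∑ v, ∑ u, (m v u : R) * (f v - f u) ^ 2 := by
  have hE : energy R m f = ∑ v, ∑ u, (m v u : R) * (f v * (f v - f u)) := by
    simp only [energy, laplacian_apply, mul_sum]
    exact sum_congr rfl fun v _ => sum_congr rfl fun u _ => by ring
  calc 2 * energy R m f
      = ∑ v, ∑ u, (m v u : R) * (f v * (f v - f u))
        + ∑ v, ∑ u, (m v u : R) * (f u * (f u - f v)) := by
        rw [two_mul, hE]
        congr 1
        exact sum_sum_mul_swap hsymm _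
    _ = ∑ v, ∑ u, (m v u : R) * (f v - f u) ^ 2 := by
        simp only [← sum_add_distrib]
        exact sum_congr rfl fun v _ => sum_congr rfl fun u _ => by ring

end Symmetric

variable [DecidableEq V]

lemma sum_indicator_mul (Z : Finset V) (g : V → R) :
    ∑ v, (Z : Set V).indicator 1 v * g v = ∑ v ∈ Z, g v := by
  simp [Set.indicator_apply, ite_mul, sum_ite_mem]

lemma laplacian_indicator (Z : Finset V) (v : V) :
    laplacian R m ((Z : Set V).indicator 1) v = -tZ m Z v := by
  by_cases hv : v ∈ Z
  · simp only [laplacian_apply, Set.indicator_apply, mem_coe, hv, if_true, Pi.one_apply, mul_sub,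
      mul_one, mul_ite, mul_zero, sum_sub_distrib, sum_ite_mem, univ_inter, tZ, Int.cast_neg,
      neg_neg, Int.cast_sum, Int.cast_natCast]
    rw [sub_eq_iff_eq_add, ← sum_compl_add_sum Z]
  · simp [tZ, hv, Set.indicator_apply]

lemma energy_indicator (Z : Finset V) :
    energy R m ((Z : Set V).indicator 1) = edgeCut m Z := by
  rw [energy, sum_indicator_mul, edgeCut]
  push_cast
  refine sum_congr rfl fun v hv => ?_
  rw [laplacian_indicator, tZ, if_pos hv]
  push_cast
  rw [neg_neg]

lemma laplacian_mem_closure_tZ (f : V → ℤ) :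
    laplacian ℤ m f ∈ AddSubgroup.closure (Set.range (tZ m)) := by
  rw [← univ_sum_single f, map_sum]
  refine AddSubgroup.sum_mem _ fun v _ => ?_
  have hsingle : (Pi.single v (f v) : V → ℤ) = f v • (({v} : Finset V) : Set V).indicator 1 := by
    ext u
    by_cases hu : u = v <;> simp [hu]
  have htZ : laplacian ℤ m ((({v} : Finset V) : Set V).indicator 1) = -tZ m {v} := by
    ext u
    simp only [laplacian_indicator, Int.cast_id, Pi.neg_apply]
  rw [hsingle, map_zsmul, htZ]
  exact AddSubgroup.zsmul_mem _ (neg_mem (AddSubgroup.subset_closure (Set.mem_range_self _))) _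

end Laplacian

variable {m : V → V → ℕ} (hsymm : ∀ u v, m u v = m v u)
include hsymm

section OrderedField

variable {K : Type*} [Field K] [LinearOrder K] [IsStrictOrderedRing K]

lemma energy_nonneg (f : V → K) : 0 ≤ energy K m f := by
  have h := two_mul_energy hsymm f
  have : 0 ≤ ∑ v, ∑ u, (m v u : K) * (f v - f u) ^ 2 := by positivity
  linarith

lemma eq_of_energy_eq_zero (hconn : (assocGraph m).Preconnected) {f : V → K}
    (hf : energy K m f = 0) (u v : V) : f u = f v := by
  have hterm : ∀ u v, (m u v : K) * (f u - f v) ^ 2 = 0 := by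
    have h2 := two_mul_energy hsymm f
    rw [hf, mul_zero, eq_comm, sum_eq_zero_iff_of_nonneg fun _ _ => by positivity] at h2
    exact fun u v => (sum_eq_zero_iff_of_nonneg fun _ _ => by positivity).1 (h2 u (mem_univ u)) v
      (mem_univ v)
  refine (hconn u v).eq_of_forall_adj fun u v huv => ?_
  have hm : (m u v : K) ≠ 0 := by
    obtain ⟨-, h | h⟩ := huv
    · positivity
    · rw [hsymm]; positivity
  simpa [hm, sub_eq_zero] using hterm u v

lemma exists_laplacian_eq (hconn : (assocGraph m).Connected) {y : V → K} (hy : ∑ v, y v = 0) :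
    ∃ f, laplacian K m f = y := by
  have : Nonempty V := hconn.nonempty
  let σ : (V → K) →ₗ[K] K := ∑ v, LinearMap.proj v
  have hσ : ∀ f, σ f = ∑ v, f v := fun f => by simp [σ]
  have hle : LinearMap.range (laplacian K m) ≤ LinearMap.ker σ := by
    rintro _ ⟨f, rfl⟩
    rw [LinearMap.mem_ker, hσ, sum_laplacian_eq_zero hsymm]
  have hker : LinearMap.ker (laplacian K m) ≤ K ∙ 1 := by
    intro f hf
    obtain ⟨v₀⟩ := ‹Nonempty V›
    have hf₀ : energy K m f = 0 := by rw [energy, LinearMap.mem_ker.1 hf]; simp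
    rw [show f = f v₀ • 1 from funext fun v => by
      simp [eq_of_energy_eq_zero hsymm hconn.preconnected hf₀ v v₀]]
    exact Submodule.smul_mem _ _ (Submodule.mem_span_singleton_self _)
  have hσsurj : LinearMap.range σ = ⊤ := LinearMap.range_eq_top.2 fun c =>
    by classical exact ⟨Pi.single (Classical.arbitrary V) c, by simp [hσ]⟩
  have h₁ := (laplacian K m).finrank_range_add_finrank_ker
  have h₂ := σ.finrank_range_add_finrank_ker
  have h₃ := (Submodule.finrank_mono hker).trans_eq (finrank_span_singleton one_ne_zero)
  rw [hσsurj, finrank_top, Module.finrank_self] at h₂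
  have hrange := Submodule.eq_of_le_of_finrank_le hle (by omega)
  exact LinearMap.mem_range.1 (hrange ▸ LinearMap.mem_ker.2 ((hσ y).trans hy))

lemma abs_sum_laplacian_le [DecidableEq V] {ψ : V → K} (Z : Finset V)
    (h₁ : energy K m ψ ≤ energy K m (ψ + (Z : Set V).indicator 1))
    (h₂ : energy K m ψ ≤ energy K m (ψ - (Z : Set V).indicator 1)) :
    |∑ v ∈ Z, laplacian K m ψ v| ≤ edgeCut m Z / 2 := by
  rw [energy_add hsymm, sum_indicator_mul, energy_indicator] at h₁
  rw [sub_eq_add_neg, energy_add hsymm, energy_neg, energy_indicator] at h₂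
  simp only [Pi.neg_apply, neg_mul, sum_neg_distrib, sum_indicator_mul] at h₂
  rw [abs_le]
  constructor <;> linarith

end OrderedField

lemma exists_forall_energy_le (φ : V → ℚ) :
    ∃ f : V → ℤ, ∀ g : V → ℤ, energy ℚ m (φ - (↑) ∘ f) ≤ energy ℚ m (φ - (↑) ∘ g) := by
  obtain ⟨N, hN, hφ⟩ := exists_natCast_mul_eq_intCast φ
  choose ψ hψ using hφ
  refine exists_forall_le_of_mul_eq_intCast (N := (N : ℚ) ^ 2) (by positivity)
    (fun f => energy_nonneg hsymm _) fun f => ⟨energy ℤ m (ψ - (N : ℤ) • f), ?_⟩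
  have hscale : (N : ℚ) • (φ - (↑) ∘ f) = Int.castRingHom ℚ ∘ (ψ - (N : ℤ) • f) := by
    ext v
    simp [mul_sub, hψ]
  rw [← energy_smul, hscale, energy_map]
  rfl

theorem exists_linEquiv_abs_sum_sub_le [DecidableEq V] (hconn : (assocGraph m).Connected)
    (d : V → ℤ) (q : V → ℚ) (hq : ∑ v, q v = ∑ v, (d v : ℚ)) :
    ∃ d' : V → ℤ, LinEquiv m d d' ∧
      ∀ Z : Finset V, |∑ v ∈ Z, ((d' v : ℚ) - q v)| ≤ edgeCut m Z / 2 := by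
  obtain ⟨φ, hφ⟩ := exists_laplacian_eq hsymm hconn (y := fun v => (d v : ℚ) - q v)
    (by rw [sum_sub_distrib, hq, sub_self])
  obtain ⟨f, hf⟩ := exists_forall_energy_le hsymm φ
  refine ⟨d - laplacian ℤ m f, ?_, fun Z => ?_⟩
  · rw [LinEquiv, sub_sub_cancel]
    exact laplacian_mem_closure_tZ f
  have hψ : ∀ v, laplacian ℚ m (φ - (↑) ∘ f) v = ((d - laplacian ℤ m f) v : ℚ) - q v := by
    intro v
    rw [map_sub, Pi.sub_apply, hφ, show laplacian ℚ m ((↑) ∘ f) = (↑) ∘ laplacian ℤ m f from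
      laplacian_map (Int.castRingHom ℚ) f]
    simp only [Function.comp_apply, Pi.sub_apply, Int.cast_sub]
    ring
  simp_rw [← hψ]
  have hχ : ((Z : Set V).indicator 1 : V → ℚ) = (↑) ∘ ((Z : Set V).indicator 1 : V → ℤ) := by
    ext v
    by_cases hv : v ∈ Z <;> simp [hv]
  apply abs_sum_laplacian_le hsymm Z
  · refine (hf (f - (Z : Set V).indicator 1)).trans_eq (congrArg _ ?_)
    rw [hχ]
    ext v
    simp only [Pi.sub_apply, Pi.add_apply, Function.comp_apply, Int.cast_sub]
    ring
  · refine (hf (f + (Z : Set V).indicator 1)).trans_eq (congrArg _ ?_)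
    rw [hχ]
    ext v
    simp only [Pi.sub_apply, Pi.add_apply, Function.comp_apply, Int.cast_add]
    ring

-- Mod 2 the pairs `(u, v)` and `(v, u)` cancel, and so does the doubled diagonal.
lemma even_sum_valence : Even (∑ v, valence m v) := by
  classical
  have hpairs : ∑ v, valence m v
      = ∑ p : V × V, ((m p.1 p.2 : ℤ) + if p.1 = p.2 then (m p.1 p.2 : ℤ) else 0) := by
    simp [valence, Fintype.sum_prod_type, sum_add_distrib]
  rw [even_iff_two_dvd, hpairs, ← Nat.cast_ofNat, ← ZMod.intCast_zmod_eq_zero_iff_dvd]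
  push_cast
  refine sum_ninvolution Prod.swap (fun p => ?_) (fun p hp hswap => ?_) (fun _ => mem_univ _)
    Prod.swap_swap
  · simp only [Prod.fst_swap, Prod.snd_swap, hsymm p.2 p.1, eq_comm (a := p.2)]
    exact CharTwo.add_self_eq_zero _
  · have hdiag : p.1 = p.2 := congrArg Prod.snd hswap
    simp [hdiag, CharTwo.add_self_eq_zero] at hp

lemma sum_canonicalW (ω : V → ℕ) : ∑ v, canonicalW m ω v = 2 * genusW m ω - 2 := by
  obtain ⟨k, hk⟩ := even_sum_valence hsymm
  have hval : ∑ v, valence m v = (∑ u, ∑ v, (m u v : ℤ)) + ∑ v, (m v v : ℤ) := by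
    simp only [valence, sum_add_distrib]
  simp only [canonicalW, genusW, sum_add_distrib, sum_sub_distrib, ← mul_sum, sum_const,
    card_univ, nsmul_eq_mul] at hk hval ⊢
  omega

end WeightedGraph

theorem exists_semibalanced_general {V : Type} [Fintype V] [DecidableEq V]
    (ω : V → ℕ) (m : V → V → ℕ) (hsymm : ∀ u v, m u v = m v u)
    (hconn : (assocGraph m).Connected)
    (hg : 2 ≤ genusW m ω)
    (d : V → ℤ) :
    ∃ d' : V → ℤ, LinEquiv m d d' ∧
      ∀ Z : Finset V,
        (degDiv d : ℚ) * (∑ v ∈ Z, (canonicalW m ω v : ℚ)) / (2 * (genusW m ω : ℚ) - 2)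
            - (∑ v ∈ Z, ∑ u ∈ Zᶜ, (m v u : ℚ)) / 2 ≤ ∑ v ∈ Z, (d' v : ℚ) ∧
        (∑ v ∈ Z, (d' v : ℚ)) ≤
          (degDiv d : ℚ) * (∑ v ∈ Z, (canonicalW m ω v : ℚ)) / (2 * (genusW m ω : ℚ) - 2)
            + (∑ v ∈ Z, ∑ u ∈ Zᶜ, (m v u : ℚ)) / 2 := by
  have hD : (0 : ℚ) < 2 * genusW m ω - 2 := by
    have : (2 : ℚ) ≤ genusW m ω := by exact_mod_cast hg
    linarith
  have hK : ∑ v, (canonicalW m ω v : ℚ) = 2 * genusW m ω - 2 := by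
    exact_mod_cast WeightedGraph.sum_canonicalW hsymm ω
  obtain ⟨d', hd', hbound⟩ := WeightedGraph.exists_linEquiv_abs_sum_sub_le hsymm hconn d
    (fun v => degDiv d * canonicalW m ω v / (2 * genusW m ω - 2))
    (by rw [← sum_div, ← mul_sum, hK, mul_div_cancel_right₀ _ hD.ne', degDiv]; push_cast; rfl)
  refine ⟨d', hd', fun Z => ?_⟩
  have h := abs_le.1 (hbound Z)
  rw [sum_sub_distrib, ← sum_div, ← mul_sum] at h
  push_cast [WeightedGraph.edgeCut] at h
  constructor <;> linarith [h.1, h.2]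

/-- **Existence of semibalanced representatives (Caporaso).** -/
theorem exists_semibalanced {V : Type} [Fintype V] [DecidableEq V]
    (ω : V → ℕ) (m : V → V → ℕ) (hsymm : ∀ u v, m u v = m v u)
    (hconn : (assocGraph m).Connected)
    (hg : 2 ≤ genusW m ω)
    (hss : ∀ v, ω v = 0 → 2 ≤ (∑ u, m v u) + m v v)
    (d : V → ℤ) :
    ∃ d' : V → ℤ, LinEquiv m d d' ∧
      ∀ Z : Finset V,
        (degDiv d : ℚ) * (∑ v ∈ Z, (canonicalW m ω v : ℚ)) / (2 * (genusW m ω : ℚ) - 2)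
            - (∑ v ∈ Z, ∑ u ∈ Zᶜ, (m v u : ℚ)) / 2 ≤ ∑ v ∈ Z, (d' v : ℚ) ∧
        (∑ v ∈ Z, (d' v : ℚ)) ≤
          (degDiv d : ℚ) * (∑ v ∈ Z, (canonicalW m ω v : ℚ)) / (2 * (genusW m ω : ℚ) - 2)
            + (∑ v ∈ Z, ∑ u ∈ Zᶜ, (m v u : ℚ)) / 2 :=
  exists_semibalanced_general ω m hsymm hconn hg d
end

section
/- Dhar decomposition: Let d be a divisor on a connected weightless loopless multigraph G and let V₀ ⊆ V be a set of vertices such that d(v) ≥ 0 for all v ∉ V₀. Then the Dhar sequence V₀ ⊆ V₁ ⊆ V₂ ⊆ … stabilizes, i.e., there exists n with V_{n+1} = V_n; and for any such n, the divisor d − t_{V_n} is linearly equivalent to d and satisfies (d − t_{V_n})(v) ≥ 0 for all v ∉ V₀. -/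
open Finset

section Dhar

variable {V : Type} [Fintype V] [DecidableEq V]

/-- One step of the Dhar algorithm: add to `S` all vertices `v ∉ S` with
`∑_{u ∈ S} m v u > d v`. -/
def dharStep (m : V → V → ℕ) (d : V → ℤ) (S : Finset V) : Finset V :=
  S ∪ (Sᶜ.filter fun v => d v < ∑ u ∈ S, (m v u : ℤ))

/-- The Dhar sequence `V₀ ⊆ V₁ ⊆ V₂ ⊆ …` starting from `V₀`. -/
def dharSeq (m : V → V → ℕ) (d : V → ℤ) (V0 : Finset V) : ℕ → Finset V
  | 0 => V0
  | n + 1 => dharStep m d (dharSeq m d V0 n)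

end Dhar

/-!
The Dhar sequence is increasing in the finite lattice of vertex sets, so it stabilizes. If
`S = V_n` is stable, every vertex `v ∉ S` has at most `d v` edges into `S`, which is exactly
`(d - t_S)(v) ≥ 0`; on `S` itself, subtracting `t_S` only adds the edges leaving `S`. Finally
`d - t_S ~ d` because `t_S` is one of the generators of the group of principal divisors.
-/

section

variable {V : Type} [Fintype V] [DecidableEq V]

theorem dharSeq_monotone (m : V → V → ℕ) (d : V → ℤ) (V0 : Finset V) :
    Monotone (dharSeq m d V0) :=
  monotone_nat_of_le_succ fun _ => subset_union_left

theorem dharSeq_exists_succ_eq (m : V → V → ℕ) (d : V → ℤ) (V0 : Finset V) :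
    ∃ n, dharSeq m d V0 (n + 1) = dharSeq m d V0 n := by
  obtain ⟨n, hn⟩ := WellFoundedGT.monotone_chain_condition ⟨_, dharSeq_monotone m d V0⟩
  exact ⟨n, (hn (n + 1) n.le_succ).symm⟩

theorem linEquiv_sub_tZ (m : V → V → ℕ) (d : V → ℤ) (Z : Finset V) :
    LinEquiv m (d - tZ m Z) d := by
  rw [LinEquiv, sub_sub_cancel_left]
  exact neg_mem (AddSubgroup.subset_closure ⟨Z, rfl⟩)

theorem le_sub_tZ_of_mem (m : V → V → ℕ) (d : V → ℤ) {Z : Finset V} {v : V} (hv : v ∈ Z) :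
    d v ≤ (d - tZ m Z) v := by
  simp only [Pi.sub_apply, tZ, if_pos hv, sub_neg_eq_add, le_add_iff_nonneg_right]
  exact sum_nonneg fun u _ => Int.natCast_nonneg _

theorem sub_tZ_nonneg_of_dharStep_eq {m : V → V → ℕ} {d : V → ℤ} {S : Finset V}
    (hS : dharStep m d S = S) {v : V} (hv : v ∉ S) : 0 ≤ (d - tZ m S) v := by
  simp only [Pi.sub_apply, tZ, if_neg hv, sub_nonneg]
  by_contra! hlt
  have hstep : v ∈ dharStep m d S := mem_union_right _ (mem_filter.2 ⟨mem_compl.2 hv, hlt⟩)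
  exact hv (hS ▸ hstep)

end

theorem dhar_decomposition_general {V : Type} [Fintype V] [DecidableEq V]
    (m : V → V → ℕ)
    (d : V → ℤ) (V0 : Finset V) (hd : ∀ v, v ∉ V0 → 0 ≤ d v) :
    (∃ n, dharSeq m d V0 (n + 1) = dharSeq m d V0 n) ∧
      ∀ n, dharSeq m d V0 (n + 1) = dharSeq m d V0 n →
        LinEquiv m (d - tZ m (dharSeq m d V0 n)) d ∧
          ∀ v, v ∉ V0 → 0 ≤ (d - tZ m (dharSeq m d V0 n)) v := by
  refine ⟨dharSeq_exists_succ_eq m d V0, fun n hn => ⟨linEquiv_sub_tZ m d _, fun v hv => ?_⟩⟩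
  by_cases hvS : v ∈ dharSeq m d V0 n
  · exact (hd v hv).trans (le_sub_tZ_of_mem m d hvS)
  · exact sub_tZ_nonneg_of_dharStep_eq hn hvS

/-- **Dhar decomposition.** The Dhar sequence stabilizes, and at any stable stage
`V_n` the divisor `d - t_(V_n)` is linearly equivalent to `d` and effective away
from `V₀`. -/
theorem dhar_decomposition {V : Type} [Fintype V] [DecidableEq V]
    (m : V → V → ℕ) (hsymm : ∀ u v, m u v = m v u) (hloop : ∀ v, m v v = 0)
    (hconn : (assocGraph m).Connected)
    (d : V → ℤ) (V0 : Finset V) (hd : ∀ v, v ∉ V0 → 0 ≤ d v) :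
    (∃ n, dharSeq m d V0 (n + 1) = dharSeq m d V0 n) ∧
      ∀ n, dharSeq m d V0 (n + 1) = dharSeq m d V0 n →
        LinEquiv m (d - tZ m (dharSeq m d V0 n)) d ∧
          ∀ v, v ∉ V0 → 0 ≤ (d - tZ m (dharSeq m d V0 n)) v :=
  dhar_decomposition_general m d V0 hd
end
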